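/- arXiv:1912.07425 — 5 statements merged into one kernel-verified Lean document; each statement's English description precedes it below -/
import Mathlib

section
/- Let ρ : ℝ → ℝ be continuous and nonnegative, with ρ(x) = 0 for |x| > 1 and ∫_ℝ ρ(x) dx = 1. Let a ∈ (0,1), η > 0, I ≥ 0, and p ∈ ℕ*. Then ∫₀^a I·η·ρ(η(x−a))·sin²(pπx/a) dx ≤ I·p²π²/(a²η²). -/
/-!
Reflecting through `x = a` gives `sin² (pπx/a) = sin² (pπ(a - x)/a) ≤ (pπ(a - x)/a)²`, and on the
support of the wall `|η(x - a)| ≤ 1`, so there the sine factor is at most `(pπ/(aη))²`. What remains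
is the mass of the wall on `[0, a]`, which after the substitution `y = η(x - a)` is at most `∫ ρ = 1`.
-/

open MeasureTheory Real

theorem sin_sq_nat_mul_pi_mul_div_le (p : ℕ) (a x : ℝ) :
    sin (p * π * x / a) ^ 2 ≤ (p * π * (a - x) / a) ^ 2 := by
  rcases eq_or_ne a 0 with rfl | ha
  · simp
  have hsign : ((-1 : ℝ) ^ p) ^ 2 = 1 := by
    rw [← pow_mul, mul_comm, pow_mul, neg_one_sq, one_pow]
  have hreflect : p * π * x / a = p * π - p * π * (a - x) / a := by field_simp; ring
  calc sin (p * π * x / a) ^ 2 = sin (p * π * (a - x) / a) ^ 2 := by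
        rw [hreflect, sin_nat_mul_pi_sub, neg_sq, mul_pow, hsign, one_mul]
    _ ≤ _ := sin_sq_le_sq

section Wall

variable {ρ : ℝ → ℝ} (hρ0 : ∀ x, 0 ≤ ρ x)
include hρ0

theorem mul_wall_mul_sin_sq_le (hρsupp : ∀ x, 1 < |x| → ρ x = 0) {η : ℝ} (hη : 0 < η)
    (p : ℕ) (a x : ℝ) :
    η * ρ (η * (x - a)) * sin (p * π * x / a) ^ 2 ≤
      (p * π / (a * η)) ^ 2 * (η * ρ (η * (x - a))) := by
  by_cases hzero : ρ (η * (x - a)) = 0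
  · simp [hzero]
  have hnear : (η * (x - a)) ^ 2 ≤ 1 :=
    (sq_le_one_iff_abs_le_one _).2 (not_lt.1 fun h ↦ hzero (hρsupp _ h))
  have hsin : sin (p * π * x / a) ^ 2 ≤ (p * π / (a * η)) ^ 2 :=
    calc sin (p * π * x / a) ^ 2 ≤ (p * π * (a - x) / a) ^ 2 := sin_sq_nat_mul_pi_mul_div_le p a x
      _ = (p * π / (a * η)) ^ 2 * (η * (x - a)) ^ 2 := by field_simp; ring
      _ ≤ (p * π / (a * η)) ^ 2 := mul_le_of_le_one_right (sq_nonneg _) hnear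
  rw [mul_comm _ (η * _)]
  exact mul_le_mul_of_nonneg_left hsin (mul_nonneg hη.le (hρ0 _))

theorem intervalIntegral_wall_le_integral (hρi : Integrable ρ) {η a : ℝ} (hη : 0 ≤ η)
    (ha : 0 ≤ a) :
    ∫ x in 0..a, η * ρ (η * (x - a)) ≤ ∫ x, ρ x := by
  have hshift : ∫ x in 0..a, η * ρ (η * (x - a)) = ∫ x in (-(η * a))..0, ρ x := by
    have := intervalIntegral.smul_integral_comp_mul_sub ρ η (η * a) (a := 0) (b := a)
    simpa only [smul_eq_mul, mul_zero, zero_sub, sub_self, ← mul_sub,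
      ← intervalIntegral.integral_const_mul] using this
  rw [hshift, intervalIntegral.integral_of_le (neg_nonpos.2 (mul_nonneg hη ha))]
  exact setIntegral_le_integral hρi (.of_forall hρ0)

end Wall

theorem stmt_4_general
    (ρ : ℝ → ℝ) (hρ0 : ∀ x, 0 ≤ ρ x)
    (hρsupp : ∀ x : ℝ, 1 < |x| → ρ x = 0)
    (hρint : ∫ x : ℝ, ρ x = 1)
    (a η I : ℝ) (ha : a ∈ Set.Ioo (0 : ℝ) 1) (hη : 0 < η) (hI : 0 ≤ I)
    (p : ℕ) :
    (∫ x in (0 : ℝ)..a, I * η * ρ (η * (x - a)) * Real.sin (p * Real.pi * x / a) ^ 2) ≤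
      I * p ^ 2 * Real.pi ^ 2 / (a ^ 2 * η ^ 2) := by
  have ha0 : 0 ≤ a := ha.1.le
  have hρi : Integrable ρ := .of_integral_ne_zero (hρint ▸ one_ne_zero)
  set C := (p * π / (a * η)) ^ 2
  have hwall_int : Integrable fun x ↦ η * ρ (η * (x - a)) :=
    ((hρi.comp_mul_left' hη.ne').comp_sub_right a).const_mul η
  have hpoint (x : ℝ) : I * η * ρ (η * (x - a)) * sin (p * π * x / a) ^ 2 ≤
      I * C * (η * ρ (η * (x - a))) := by
    simpa only [mul_assoc] using
      mul_le_mul_of_nonneg_left (mul_wall_mul_sin_sq_le hρ0 hρsupp hη p a x) hI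
  have hnonneg (x : ℝ) : 0 ≤ I * η * ρ (η * (x - a)) * sin (p * π * x / a) ^ 2 :=
    mul_nonneg (mul_nonneg (mul_nonneg hI hη.le) (hρ0 _)) (sq_nonneg _)
  calc _ ≤ ∫ x in 0..a, I * C * (η * ρ (η * (x - a))) := by
        simp only [intervalIntegral.integral_of_le ha0]
        exact integral_mono_of_nonneg (.of_forall hnonneg)
          ((hwall_int.const_mul _).integrableOn) (.of_forall hpoint)
    _ = I * C * ∫ x in 0..a, η * ρ (η * (x - a)) := intervalIntegral.integral_const_mul _ _
    _ ≤ I * C * 1 := by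
        gcongr
        exact hρint ▸ intervalIntegral_wall_le_integral hρ0 hρi hη.le ha0
    _ = I * p ^ 2 * π ^ 2 / (a ^ 2 * η ^ 2) := by simp only [C, mul_one]; ring

/-- The potential-energy term of the Rayleigh quotient of a left eigenmode:
`∫₀^a I·η·ρ(η(x-a))·sin²(pπx/a) dx ≤ I·p²π²/(a²η²)`. -/
theorem stmt_4
    (ρ : ℝ → ℝ) (hρc : Continuous ρ) (hρ0 : ∀ x, 0 ≤ ρ x)
    (hρsupp : ∀ x : ℝ, 1 < |x| → ρ x = 0)
    (hρint : ∫ x : ℝ, ρ x = 1)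
    (a η I : ℝ) (ha : a ∈ Set.Ioo (0 : ℝ) 1) (hη : 0 < η) (hI : 0 ≤ I)
    (p : ℕ) (hp : 0 < p) :
    (∫ x in (0 : ℝ)..a, I * η * ρ (η * (x - a)) * Real.sin (p * Real.pi * x / a) ^ 2) ≤
      I * p ^ 2 * Real.pi ^ 2 / (a ^ 2 * η ^ 2) :=
  stmt_4_general ρ hρ0 hρsupp hρint a η I ha hη hI p
end

section
/- Let ρ : ℝ → ℝ be continuous and nonnegative with ρ(x) = 0 for |x| > 1 and ∫_ℝ ρ = 1; let a ∈ (0,1), η > 0, I ≥ 0. For p, q ∈ ℕ*, define φ_p^l(x) = √(2/a)·sin(pπx/a) for x ∈ [0,a] and φ_p^l(x) = 0 for x ∈ (a,1], and φ_q^r(x) = √(2/(1−a))·sin(qπ(1−x)/(1−a)) for x ∈ [a,1] and φ_q^r(x) = 0 for x ∈ [0,a). Let P, Q ⊂ ℕ* be finite sets with k = |P| + |Q| ≥ 1, and let Λ = max( {p²π²/a² : p ∈ P} ∪ {q²π²/(1−a)² : q ∈ Q} ). Given coefficients b : P → ℂ and c : Q → ℂ, set u(x) = Σ_{p∈P} b_p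 φ_p^l(x) + Σ_{q∈Q} c_q φ_q^r(x), and let g(x) = Σ_{p∈P} b_p √(2/a)(pπ/a)cos(pπx/a)·1_{x∈(0,a)} − Σ_{q∈Q} c_q √(2/(1−a))(qπ/(1−a))cos(qπ(1−x)/(1−a))·1_{x∈(a,1)} be the almost-everywhere derivative of u. Then ∫₀¹ ( |g(x)|² + I·η·ρ(η(x−a))·|u(x)|² ) dx ≤ Λ·(1 + 2kI/(min(a,1−a)·η²))·∫₀¹ |u(x)|² dx. -/
/-!
Write `u = Σ zᵢ φᵢ` in the Dirichlet modes of `(0,a) ∪ (a,1)`. The modes are orthonormal in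
`L²(0,1)` and their derivatives are orthogonal with `‖φᵢ'‖² = μᵢ ≤ Λ`, so `∫ |g|² ≤ Λ ∫ |u|²`.
For the potential, every mode vanishes at the interface, whence
`φᵢ(x)² ≤ 2 μᵢ (x - a)² / min(a, 1 - a)`, and the potential lives on `|x - a| ≤ 1/η`, where
therefore `φᵢ² ≤ 2Λ / (min(a, 1 - a) η²)`.
Cauchy–Schwarz gives `|u|² ≤ k Σ |zᵢ|² φᵢ²`, and the potential has total mass at most `I`.
-/

open MeasureTheory Real ComplexConjugate

theorem integral_cos_int_mul_pi_div {L : ℝ} (hL : L ≠ 0) (k : ℤ) :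
    ∫ y in (0 : ℝ)..L, cos (k * π * y / L) = if k = 0 then L else 0 := by
  split_ifs with hk
  · simp [hk]
  · have hc : (k * π / L : ℝ) ≠ 0 := by simp [hk, hL, pi_ne_zero]
    have (y : ℝ) : k * π * y / L = k * π / L * y := by ring
    simp_rw [this]
    rw [intervalIntegral.integral_comp_mul_left cos hc, integral_cos, mul_zero, sin_zero,
      div_mul_cancel₀ _ hL, sin_int_mul_pi]
    simp

theorem integral_sin_mul_sin {L : ℝ} (hL : L ≠ 0) {m : ℕ} (hm : 0 < m) (n : ℕ) :
    ∫ y in (0 : ℝ)..L, sin (m * π * y / L) * sin (n * π * y / L) =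
      if m = n then L / 2 else 0 := by
  have h (y : ℝ) : sin (m * π * y / L) * sin (n * π * y / L) =
      (cos (((m - n : ℤ) : ℝ) * π * y / L) - cos (((m + n : ℤ) : ℝ) * π * y / L)) / 2 := by
    rw [eq_div_iff two_ne_zero, mul_comm, ← mul_assoc, two_mul_sin_mul_sin]
    push_cast; ring_nf
  simp_rw [h]
  rw [intervalIntegral.integral_div,
    intervalIntegral.integral_sub ((by fun_prop : Continuous _).intervalIntegrable _ _)
      ((by fun_prop : Continuous _).intervalIntegrable _ _),
    integral_cos_int_mul_pi_div hL, integral_cos_int_mul_pi_div hL]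
  split_ifs <;> first | omega | ring

theorem integral_cos_mul_cos {L : ℝ} (hL : L ≠ 0) {m : ℕ} (hm : 0 < m) (n : ℕ) :
    ∫ y in (0 : ℝ)..L, cos (m * π * y / L) * cos (n * π * y / L) =
      if m = n then L / 2 else 0 := by
  have h (y : ℝ) : cos (m * π * y / L) * cos (n * π * y / L) =
      (cos (((m - n : ℤ) : ℝ) * π * y / L) + cos (((m + n : ℤ) : ℝ) * π * y / L)) / 2 := by
    rw [eq_div_iff two_ne_zero, mul_comm, ← mul_assoc, two_mul_cos_mul_cos]
    push_cast; ring_nf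
  simp_rw [h]
  rw [intervalIntegral.integral_div,
    intervalIntegral.integral_add ((by fun_prop : Continuous _).intervalIntegrable _ _)
      ((by fun_prop : Continuous _).intervalIntegrable _ _),
    integral_cos_int_mul_pi_div hL, integral_cos_int_mul_pi_div hL]
  split_ifs <;> first | omega | ring

theorem IntervalIntegrable.mul_of_abs_le {f g : ℝ → ℝ} (hf : Measurable f) (hg : Measurable g)
    {C D : ℝ} (hfC : ∀ x, |f x| ≤ C) (hgD : ∀ x, |g x| ≤ D) (s t : ℝ) :
    IntervalIntegrable (fun x => f x * g x) volume s t :=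
  (intervalIntegrable_const (c := C * D)).mono_fun (hf.mul hg).aestronglyMeasurable <|
    ae_of_all _ fun x => by
      simp only [norm_mul, Real.norm_eq_abs]
      exact (mul_le_mul (hfC x) (hgD x) (abs_nonneg _) ((abs_nonneg _).trans (hfC x))).trans
        ((le_abs_self _).trans (abs_mul C D).le)

noncomputable def dirichletMode (L : ℝ) (p : ℕ) (y : ℝ) : ℝ :=
  if 0 ≤ y ∧ y ≤ L then √(2 / L) * sin (p * π * y / L) else 0

noncomputable def dirichletModeDeriv (L : ℝ) (p : ℕ) (y : ℝ) : ℝ :=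
  if 0 < y ∧ y < L then √(2 / L) * (p * π / L) * cos (p * π * y / L) else 0

section DirichletMode

variable {L : ℝ} {p : ℕ}

theorem dirichletMode_of_le (hL : L ≠ 0) {y : ℝ} (hy : L ≤ y) : dirichletMode L p y = 0 := by
  rcases hy.lt_or_eq with hy | rfl
  · simp [dirichletMode, hy.not_ge]
  · simp [dirichletMode, hL, sin_nat_mul_pi]

theorem dirichletModeDeriv_of_le {y : ℝ} (hy : L ≤ y) : dirichletModeDeriv L p y = 0 := by
  simp [dirichletModeDeriv, hy.not_gt]

@[fun_prop]
theorem measurable_dirichletMode : Measurable (dirichletMode L p) :=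
  Measurable.ite measurableSet_Icc (by fun_prop) measurable_const

@[fun_prop]
theorem measurable_dirichletModeDeriv : Measurable (dirichletModeDeriv L p) :=
  Measurable.ite measurableSet_Ioo (by fun_prop) measurable_const

theorem abs_dirichletMode_le (y : ℝ) : |dirichletMode L p y| ≤ √(2 / L) := by
  unfold dirichletMode
  split_ifs
  · rw [abs_mul, abs_of_nonneg (sqrt_nonneg _)]
    exact mul_le_of_le_one_right (sqrt_nonneg _) (abs_sin_le_one _)
  · rw [abs_zero]; positivity

theorem abs_dirichletModeDeriv_le (y : ℝ) :
    |dirichletModeDeriv L p y| ≤ √(2 / L) * |p * π / L| := by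
  unfold dirichletModeDeriv
  split_ifs
  · rw [abs_mul, abs_mul, abs_of_nonneg (sqrt_nonneg _)]
    exact mul_le_of_le_one_right (by positivity) (abs_cos_le_one _)
  · rw [abs_zero]; positivity

theorem integral_eq_of_eqOn_Ioo_of_eqOn_zero {f g : ℝ → ℝ} {T : ℝ} (hL : 0 ≤ L) (hLT : L ≤ T)
    (hf : IntervalIntegrable f volume 0 T)
    (hfg : Set.EqOn f g (Set.Ioo 0 L)) (hf0 : Set.EqOn f 0 (Set.Ioo L T)) :
    ∫ y in (0 : ℝ)..T, f y = ∫ y in (0 : ℝ)..L, g y := by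
  rw [← intervalIntegral.integral_add_adjacent_intervals (hf.mono_set ?_) (hf.mono_set ?_),
    intervalIntegral.integral_congr_Ioo_of_le hL hfg,
    intervalIntegral.integral_congr_Ioo_of_le hLT hf0]
  · simp
  · exact Set.uIcc_subset_uIcc Set.left_mem_uIcc (Set.mem_uIcc_of_le hL hLT)
  · exact Set.uIcc_subset_uIcc (Set.mem_uIcc_of_le hL hLT) Set.right_mem_uIcc

theorem integral_dirichletMode_mul (hL : 0 < L) {T : ℝ} (hLT : L ≤ T) (hp : 0 < p) (p' : ℕ) :
    ∫ y in (0 : ℝ)..T, dirichletMode L p y * dirichletMode L p' y = if p = p' then 1 else 0 := by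
  rw [integral_eq_of_eqOn_Ioo_of_eqOn_zero
    (g := fun y => 2 / L * (sin (p * π * y / L) * sin (p' * π * y / L))) hL.le hLT]
  · rw [intervalIntegral.integral_const_mul, integral_sin_mul_sin hL.ne' hp]
    split_ifs
    · field_simp
    · simp
  · exact .mul_of_abs_le (by fun_prop) (by fun_prop) abs_dirichletMode_le abs_dirichletMode_le _ _
  · rintro y ⟨hy0, hyL⟩
    simp only [dirichletMode, if_pos (And.intro hy0.le hyL.le)]
    rw [mul_mul_mul_comm, mul_self_sqrt (by positivity)]
  · rintro y ⟨hyL, -⟩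
    simp [dirichletMode_of_le hL.ne' hyL.le]

theorem integral_dirichletModeDeriv_mul (hL : 0 < L) {T : ℝ} (hLT : L ≤ T) (hp : 0 < p) (p' : ℕ) :
    ∫ y in (0 : ℝ)..T, dirichletModeDeriv L p y * dirichletModeDeriv L p' y =
      if p = p' then p ^ 2 * π ^ 2 / L ^ 2 else 0 := by
  rw [integral_eq_of_eqOn_Ioo_of_eqOn_zero (g := fun y => 2 / L * (p * π / L) * (p' * π / L) *
    (cos (p * π * y / L) * cos (p' * π * y / L))) hL.le hLT]
  · rw [intervalIntegral.integral_const_mul, integral_cos_mul_cos hL.ne' hp]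
    split_ifs with h
    · subst h; field_simp
    · simp
  · exact .mul_of_abs_le (by fun_prop) (by fun_prop) abs_dirichletModeDeriv_le
      abs_dirichletModeDeriv_le _ _
  · rintro y ⟨hy0, hyL⟩
    simp only [dirichletModeDeriv, if_pos (And.intro hy0 hyL)]
    linear_combination (p * π / L * (p' * π / L) * (cos (p * π * y / L) * cos (p' * π * y / L)))
      * mul_self_sqrt (show 0 ≤ 2 / L by positivity)
  · rintro y ⟨hyL, -⟩
    simp [dirichletModeDeriv_of_le hyL.le]

theorem sq_dirichletMode_le (hL : 0 < L) (y : ℝ) :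
    dirichletMode L p y ^ 2 ≤ 2 / L * (p ^ 2 * π ^ 2 / L ^ 2) * (y - L) ^ 2 := by
  unfold dirichletMode
  split_ifs
  · have hsin : sin (p * π * y / L) ^ 2 = sin (p * π * (y - L) / L) ^ 2 := by
      rw [show p * π * y / L = p * π * (y - L) / L + p * π by field_simp; ring,
        sin_add_nat_mul_pi, mul_pow, ← pow_mul, pow_mul', neg_one_sq, one_pow, one_mul]
    rw [mul_pow, sq_sqrt (by positivity), hsin]
    calc 2 / L * sin (p * π * (y - L) / L) ^ 2 ≤ 2 / L * (p * π * (y - L) / L) ^ 2 :=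
          mul_le_mul_of_nonneg_left sin_sq_le_sq (by positivity)
      _ = _ := by ring
  · rw [zero_pow two_ne_zero]; positivity

end DirichletMode

section L2Span

variable {α ι : Type*} [MeasurableSpace α] {μ : Measure α} {S : Finset ι}

theorem norm_sum_mul_ofReal_sq (z : ι → ℂ) (r : ι → ℝ) :
    ‖∑ i ∈ S, z i * r i‖ ^ 2 = ∑ i ∈ S, ∑ j ∈ S, (z i * conj (z j)).re * (r i * r j) := by
  rw [← Complex.normSq_eq_norm_sq, ← Complex.ofReal_re (Complex.normSq _), ← Complex.mul_conj,
    map_sum, Finset.sum_mul_sum, Complex.re_sum]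
  refine Finset.sum_congr rfl fun i _ => ?_
  rw [Complex.re_sum]
  refine Finset.sum_congr rfl fun j _ => ?_
  rw [map_mul, Complex.conj_ofReal, mul_mul_mul_comm, ← Complex.ofReal_mul, Complex.re_mul_ofReal]

theorem norm_sum_mul_ofReal_sq_le (z : ι → ℂ) (r : ι → ℝ) :
    ‖∑ i ∈ S, z i * r i‖ ^ 2 ≤ S.card * ∑ i ∈ S, ‖z i‖ ^ 2 * r i ^ 2 := by
  calc ‖∑ i ∈ S, z i * r i‖ ^ 2 ≤ (∑ i ∈ S, ‖z i‖ * |r i|) ^ 2 := by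
        gcongr
        refine (norm_sum_le _ _).trans_eq (Finset.sum_congr rfl fun i _ => ?_)
        rw [norm_mul, Complex.norm_real, Real.norm_eq_abs]
    _ ≤ S.card * ∑ i ∈ S, (‖z i‖ * |r i|) ^ 2 := sq_sum_le_card_mul_sum_sq
    _ = S.card * ∑ i ∈ S, ‖z i‖ ^ 2 * r i ^ 2 := by simp_rw [mul_pow, sq_abs]

theorem mul_norm_sum_mul_ofReal_sq_le {w β : ℝ} (hw : 0 ≤ w) (z : ι → ℂ) {r : ι → ℝ}
    (hr : ∀ i ∈ S, w * r i ^ 2 ≤ β * w) :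
    w * ‖∑ i ∈ S, z i * r i‖ ^ 2 ≤ S.card * β * (∑ i ∈ S, ‖z i‖ ^ 2) * w :=
  calc w * ‖∑ i ∈ S, z i * r i‖ ^ 2 ≤ w * (S.card * ∑ i ∈ S, ‖z i‖ ^ 2 * r i ^ 2) := by
        gcongr; exact norm_sum_mul_ofReal_sq_le z r
    _ = S.card * ∑ i ∈ S, ‖z i‖ ^ 2 * (w * r i ^ 2) := by
        rw [Finset.mul_sum, Finset.mul_sum, Finset.mul_sum]
        exact Finset.sum_congr rfl fun i _ => by ring
    _ ≤ S.card * ∑ i ∈ S, ‖z i‖ ^ 2 * (β * w) := by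
        gcongr S.card * ∑ i ∈ S, _ * ?_ with i hi
        exact hr i hi
    _ = S.card * β * (∑ i ∈ S, ‖z i‖ ^ 2) * w := by rw [← Finset.sum_mul]; ring

variable {F : ι → α → ℝ}

theorem integrable_norm_sum_sq (hF : ∀ i ∈ S, ∀ j ∈ S, Integrable (fun x => F i x * F j x) μ)
    (z : ι → ℂ) : Integrable (fun x => ‖∑ i ∈ S, z i * F i x‖ ^ 2) μ := by
  simp_rw [norm_sum_mul_ofReal_sq]
  exact integrable_finsetSum _ fun i hi => integrable_finsetSum _ fun j hj =>
    (hF i hi j hj).const_mul _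

variable {W : α → ℝ} {β : ℝ}

theorem integrable_weight_mul_norm_sum_sq (hW0 : ∀ x, 0 ≤ W x) (hW : Integrable W μ)
    (hint : ∀ i ∈ S, ∀ j ∈ S, Integrable (fun x => F i x * F j x) μ)
    (hWF : ∀ i ∈ S, ∀ x, W x * F i x ^ 2 ≤ β * W x) (z : ι → ℂ) :
    Integrable (fun x => W x * ‖∑ i ∈ S, z i * F i x‖ ^ 2) μ :=
  (hW.const_mul _).mono' (hW.1.mul (integrable_norm_sum_sq hint z).1) <| ae_of_all _ fun x => by
    rw [Real.norm_eq_abs, abs_of_nonneg (by have := hW0 x; positivity)]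
    exact mul_norm_sum_mul_ofReal_sq_le (hW0 x) z fun i hi => hWF i hi x

theorem integral_weight_mul_norm_sum_sq_le (hW0 : ∀ x, 0 ≤ W x) (hW : Integrable W μ)
    (hint : ∀ i ∈ S, ∀ j ∈ S, Integrable (fun x => F i x * F j x) μ)
    (hWF : ∀ i ∈ S, ∀ x, W x * F i x ^ 2 ≤ β * W x) (z : ι → ℂ) :
    ∫ x, W x * ‖∑ i ∈ S, z i * F i x‖ ^ 2 ∂μ ≤
      S.card * β * (∑ i ∈ S, ‖z i‖ ^ 2) * ∫ x, W x ∂μ := by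
  rw [← integral_const_mul]
  exact integral_mono (integrable_weight_mul_norm_sum_sq hW0 hW hint hWF z) (hW.const_mul _)
    fun x => mul_norm_sum_mul_ofReal_sq_le (hW0 x) z fun i hi => hWF i hi x

variable [DecidableEq ι]

def IsL2Orthogonal (μ : Measure α) (S : Finset ι) (F : ι → α → ℝ) (v : ι → ℝ) : Prop :=
  ∀ i ∈ S, ∀ j ∈ S, ∫ x, F i x * F j x ∂μ = if i = j then v i else 0

theorem IsL2Orthogonal.sumElim {κ : Type*} [DecidableEq κ] {T : Finset κ} {F : ι → α → ℝ}
    {G : κ → α → ℝ} {v : ι → ℝ} {w : κ → ℝ} (hF : IsL2Orthogonal μ S F v) (hG : IsL2Orthogonal μ T G w)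
    (hFG : ∀ i j x, F i x * G j x = 0) :
    IsL2Orthogonal μ (S.disjSum T) (Sum.elim F G) (Sum.elim v w) := by
  rintro (i | i) hi (j | j) hj <;>
    simp only [Finset.inl_mem_disjSum, Finset.inr_mem_disjSum] at hi hj
  · simpa using hF i hi j hj
  · simp [hFG]
  · simp [mul_comm (G i _), hFG]
  · simpa using hG i hi j hj

theorem IsL2Orthogonal.integral_norm_sum_sq {v : ι → ℝ} (hF : IsL2Orthogonal μ S F v)
    (hint : ∀ i ∈ S, ∀ j ∈ S, Integrable (fun x => F i x * F j x) μ) (z : ι → ℂ) :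
    ∫ x, ‖∑ i ∈ S, z i * F i x‖ ^ 2 ∂μ = ∑ i ∈ S, ‖z i‖ ^ 2 * v i := by
  simp_rw [norm_sum_mul_ofReal_sq]
  rw [integral_finsetSum _ fun i hi => integrable_finsetSum _ fun j hj =>
    (hint i hi j hj).const_mul _]
  refine Finset.sum_congr rfl fun i hi => ?_
  rw [integral_finsetSum _ fun j hj => (hint i hi j hj).const_mul _]
  simp_rw [integral_const_mul]
  rw [Finset.sum_congr rfl fun j hj => congrArg _ (hF i hi j hj)]
  simp only [mul_ite, mul_zero, Finset.sum_ite_eq, if_pos hi, Complex.mul_conj, Complex.ofReal_re,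
    Complex.normSq_eq_norm_sq]

theorem integral_energy_le {E D : ι → α → ℝ} {ν : ι → ℝ} {Λ c : ℝ}
    (hE : IsL2Orthogonal μ S E 1) (hD : IsL2Orthogonal μ S D ν)
    (hEint : ∀ i ∈ S, ∀ j ∈ S, Integrable (fun x => E i x * E j x) μ)
    (hDint : ∀ i ∈ S, ∀ j ∈ S, Integrable (fun x => D i x * D j x) μ)
    (hν : ∀ i ∈ S, ν i ≤ Λ) (hW0 : ∀ x, 0 ≤ W x) (hW : Integrable W μ) (hWc : ∫ x, W x ∂μ ≤ c)
    (hβ : 0 ≤ β) (hWE : ∀ i ∈ S, ∀ x, W x * E i x ^ 2 ≤ β * W x) (z : ι → ℂ) :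
    ∫ x, ‖∑ i ∈ S, z i * D i x‖ ^ 2 + W x * ‖∑ i ∈ S, z i * E i x‖ ^ 2 ∂μ ≤
      (Λ + S.card * β * c) * ∫ x, ‖∑ i ∈ S, z i * E i x‖ ^ 2 ∂μ := by
  have hN : 0 ≤ ∑ i ∈ S, ‖z i‖ ^ 2 := by positivity
  rw [integral_add (integrable_norm_sum_sq hDint z)
      (integrable_weight_mul_norm_sum_sq hW0 hW hEint hWE z),
    hD.integral_norm_sum_sq hDint, hE.integral_norm_sum_sq hEint]
  have hkin : ∑ i ∈ S, ‖z i‖ ^ 2 * ν i ≤ Λ * ∑ i ∈ S, ‖z i‖ ^ 2 := by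
    rw [Finset.mul_sum]
    exact Finset.sum_le_sum fun i hi => by rw [mul_comm Λ]; gcongr; exact hν i hi
  have hpot := (integral_weight_mul_norm_sum_sq_le hW0 hW hEint hWE z).trans
    (mul_le_mul_of_nonneg_left hWc (by positivity))
  simp only [Pi.one_apply, mul_one]
  linarith

end L2Span

/-- `splitMode a (.inl p)` and `splitMode a (.inr q)` are the paper's `φ_p^l` and `φ_q^r`: the
right modes are the Dirichlet modes of `(0, 1 - a)` reflected by `x ↦ 1 - x`. -/
noncomputable def splitMode (a : ℝ) : ℕ ⊕ ℕ → ℝ → ℝ :=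
  Sum.elim (fun p x => dirichletMode a p x) (fun q x => dirichletMode (1 - a) q (1 - x))

noncomputable def splitModeDeriv (a : ℝ) : ℕ ⊕ ℕ → ℝ → ℝ :=
  Sum.elim (fun p x => dirichletModeDeriv a p x)
    (fun q x => -dirichletModeDeriv (1 - a) q (1 - x))

noncomputable def splitEigenvalue (a : ℝ) : ℕ ⊕ ℕ → ℝ :=
  Sum.elim (fun p => p ^ 2 * π ^ 2 / a ^ 2) (fun q => q ^ 2 * π ^ 2 / (1 - a) ^ 2)

section SplitMode

variable {a : ℝ}

theorem intervalIntegrable_splitMode_mul (i j : ℕ ⊕ ℕ) (s t : ℝ) :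
    IntervalIntegrable (fun x => splitMode a i x * splitMode a j x) volume s t := by
  have hbdd (i : ℕ ⊕ ℕ) : Measurable (splitMode a i) ∧ ∃ C, ∀ x, |splitMode a i x| ≤ C := by
    rcases i with p | q
    · exact ⟨measurable_dirichletMode, _, abs_dirichletMode_le⟩
    · exact ⟨by simp only [splitMode, Sum.elim_inr]; fun_prop, √(2 / (1 - a)),
      fun x => abs_dirichletMode_le (1 - x)⟩
  obtain ⟨hi, _, hiC⟩ := hbdd i
  obtain ⟨hj, _, hjC⟩ := hbdd j
  exact .mul_of_abs_le hi hj hiC hjC s t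

theorem intervalIntegrable_splitModeDeriv_mul (i j : ℕ ⊕ ℕ) (s t : ℝ) :
    IntervalIntegrable (fun x => splitModeDeriv a i x * splitModeDeriv a j x) volume s t := by
  have hbdd (i : ℕ ⊕ ℕ) : Measurable (splitModeDeriv a i) ∧
      ∃ C, ∀ x, |splitModeDeriv a i x| ≤ C := by
    rcases i with p | q
    · exact ⟨measurable_dirichletModeDeriv, _, abs_dirichletModeDeriv_le⟩
    · refine ⟨by simp only [splitModeDeriv, Sum.elim_inr]; fun_prop,
        √(2 / (1 - a)) * |q * π / (1 - a)|, fun x => ?_⟩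
      simpa only [splitModeDeriv, Sum.elim_inr, abs_neg] using abs_dirichletModeDeriv_le (1 - x)
  obtain ⟨hi, _, hiC⟩ := hbdd i
  obtain ⟨hj, _, hjC⟩ := hbdd j
  exact .mul_of_abs_le hi hj hiC hjC s t

variable {P Q : Finset ℕ}

theorem sum_disjSum_splitMode (b c : ℕ → ℂ) (x : ℝ) :
    ∑ i ∈ P.disjSum Q, Sum.elim b c i * (splitMode a i x : ℂ) =
      (∑ p ∈ P, b p * (if 0 ≤ x ∧ x ≤ a then ((√(2 / a) * sin (p * π * x / a) : ℝ) : ℂ) else 0)) +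
      ∑ q ∈ Q, c q * (if a ≤ x ∧ x ≤ 1 then
        ((√(2 / (1 - a)) * sin (q * π * (1 - x) / (1 - a)) : ℝ) : ℂ) else 0) := by
  simp only [Finset.sum_disjSum, Sum.elim_inl, Sum.elim_inr, splitMode, dirichletMode,
    apply_ite Complex.ofReal, Complex.ofReal_zero, sub_nonneg, sub_le_sub_iff_left, and_comm]

theorem sum_disjSum_splitModeDeriv (b c : ℕ → ℂ) (x : ℝ) :
    ∑ i ∈ P.disjSum Q, Sum.elim b c i * (splitModeDeriv a i x : ℂ) =
      (∑ p ∈ P, b p * (if 0 < x ∧ x < a then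
        ((√(2 / a) * (p * π / a) * cos (p * π * x / a) : ℝ) : ℂ) else 0)) -
      ∑ q ∈ Q, c q * (if a < x ∧ x < 1 then
        ((√(2 / (1 - a)) * (q * π / (1 - a)) * cos (q * π * (1 - x) / (1 - a)) : ℝ) : ℂ)
        else 0) := by
  rw [sub_eq_add_neg, ← Finset.sum_neg_distrib]
  simp only [Finset.sum_disjSum, Sum.elim_inl, Sum.elim_inr, splitModeDeriv, dirichletModeDeriv,
    apply_ite Complex.ofReal, Complex.ofReal_zero, sub_pos, sub_lt_sub_iff_left, and_comm,
    Complex.ofReal_neg, mul_neg]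

theorem splitEigenvalue_le_of_isGreatest {Λ : ℝ}
    (hΛ : IsGreatest ((fun p : ℕ => (p : ℝ) ^ 2 * π ^ 2 / a ^ 2) '' P ∪
      (fun q : ℕ => (q : ℝ) ^ 2 * π ^ 2 / (1 - a) ^ 2) '' Q) Λ) :
    ∀ i ∈ P.disjSum Q, splitEigenvalue a i ≤ Λ := by
  rintro (p | q) hi <;> simp only [Finset.inl_mem_disjSum, Finset.inr_mem_disjSum] at hi
  exacts [hΛ.2 (Or.inl ⟨p, hi, rfl⟩), hΛ.2 (Or.inr ⟨q, hi, rfl⟩)]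

theorem isL2Orthogonal_splitMode (ha : a ∈ Set.Ioo 0 1) (hP : ∀ p ∈ P, 0 < p)
    (hQ : ∀ q ∈ Q, 0 < q) :
    IsL2Orthogonal (volume.restrict (Set.Ioc 0 1)) (P.disjSum Q) (splitMode a) 1 := by
  rw [← Sum.elim_one_one]
  refine IsL2Orthogonal.sumElim (fun p hp p' _ => ?_) (fun q hq q' _ => ?_) fun p q x => ?_
  · rw [← intervalIntegral.integral_of_le zero_le_one,
      integral_dirichletMode_mul ha.1 ha.2.le (hP p hp), Pi.one_apply]
  · rw [← intervalIntegral.integral_of_le zero_le_one,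
      intervalIntegral.integral_comp_sub_left (fun y => dirichletMode (1 - a) q y *
        dirichletMode (1 - a) q' y), sub_self, sub_zero,
      integral_dirichletMode_mul (sub_pos.2 ha.2) (by linarith [ha.1]) (hQ q hq), Pi.one_apply]
  · rcases le_or_gt a x with hx | hx
    · rw [dirichletMode_of_le ha.1.ne' hx, zero_mul]
    · rw [dirichletMode_of_le (sub_pos.2 ha.2).ne' (by linarith), mul_zero]

theorem isL2Orthogonal_splitModeDeriv (ha : a ∈ Set.Ioo 0 1) (hP : ∀ p ∈ P, 0 < p)
    (hQ : ∀ q ∈ Q, 0 < q) :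
    IsL2Orthogonal (volume.restrict (Set.Ioc 0 1)) (P.disjSum Q) (splitModeDeriv a)
      (splitEigenvalue a) := by
  refine IsL2Orthogonal.sumElim (fun p hp p' _ => ?_) (fun q hq q' _ => ?_) fun p q x => ?_
  · rw [← intervalIntegral.integral_of_le zero_le_one,
      integral_dirichletModeDeriv_mul ha.1 ha.2.le (hP p hp)]
  · simp_rw [← intervalIntegral.integral_of_le zero_le_one, neg_mul_neg]
    rw [intervalIntegral.integral_comp_sub_left (fun y => dirichletModeDeriv (1 - a) q y *
        dirichletModeDeriv (1 - a) q' y), sub_self, sub_zero,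
      integral_dirichletModeDeriv_mul (sub_pos.2 ha.2) (by linarith [ha.1]) (hQ q hq)]
  · rcases le_or_gt a x with hx | hx
    · rw [dirichletModeDeriv_of_le hx, zero_mul]
    · rw [dirichletModeDeriv_of_le (L := 1 - a) (y := 1 - x) (by linarith), neg_zero, mul_zero]

theorem sq_splitMode_le (ha : a ∈ Set.Ioo 0 1) (i : ℕ ⊕ ℕ) (x : ℝ) :
    splitMode a i x ^ 2 ≤ 2 / min a (1 - a) * splitEigenvalue a i * (x - a) ^ 2 := by
  have hmin : 0 < min a (1 - a) := lt_min ha.1 (sub_pos.2 ha.2)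
  rcases i with p | q
  · simp only [splitMode, splitEigenvalue, Sum.elim_inl]
    refine (sq_dirichletMode_le ha.1 x).trans ?_
    gcongr
    exact min_le_left _ _
  · simp only [splitMode, splitEigenvalue, Sum.elim_inr]
    have h := sq_dirichletMode_le (p := q) (sub_pos.2 ha.2) (1 - x)
    rw [show (1 - x - (1 - a)) ^ 2 = (x - a) ^ 2 by ring] at h
    refine h.trans ?_
    gcongr
    exact min_le_right _ _

end SplitMode

section Bump

variable {ρ : ℝ → ℝ} {η : ℝ}

theorem integrable_comp_mul_sub (hρ : ∫ x, ρ x = 1) (hη : η ≠ 0) (a : ℝ) :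
    Integrable fun x => ρ (η * (x - a)) :=
  ((Integrable.of_integral_ne_zero (hρ ▸ one_ne_zero)).comp_mul_left' hη).comp_sub_right a

theorem setIntegral_mul_comp_mul_sub_le (hρ0 : ∀ x, 0 ≤ ρ x) (hρ : ∫ x, ρ x = 1) (hη : 0 < η)
    {I : ℝ} (hI : 0 ≤ I) (a : ℝ) (s : Set ℝ) :
    ∫ x in s, I * η * ρ (η * (x - a)) ≤ I := by
  have htotal : ∫ x, ρ (η * (x - a)) = η⁻¹ := by
    rw [integral_sub_right_eq_self (fun y => ρ (η * y)) a, Measure.integral_comp_mul_left, hρ,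
      smul_eq_mul, mul_one, abs_of_pos (inv_pos.2 hη)]
  calc ∫ x in s, I * η * ρ (η * (x - a)) = I * η * ∫ x in s, ρ (η * (x - a)) :=
        integral_const_mul _ _
    _ ≤ I * η * η⁻¹ := by
        gcongr
        exact htotal ▸ setIntegral_le_integral (integrable_comp_mul_sub hρ hη.ne' a)
          (ae_of_all _ fun x => hρ0 _)
    _ = I := by field_simp

theorem mul_sq_splitMode_le (hρ0 : ∀ x, 0 ≤ ρ x) (hρsupp : ∀ x : ℝ, 1 < |x| → ρ x = 0)
    (hη : 0 < η) {I : ℝ} (hI : 0 ≤ I) {a : ℝ} (ha : a ∈ Set.Ioo 0 1) {Λ : ℝ} {i : ℕ ⊕ ℕ}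
    (hi : splitEigenvalue a i ≤ Λ) (x : ℝ) :
    I * η * ρ (η * (x - a)) * splitMode a i x ^ 2 ≤
      2 * Λ / (min a (1 - a) * η ^ 2) * (I * η * ρ (η * (x - a))) := by
  rcases eq_or_ne (ρ (η * (x - a))) 0 with h | h
  · simp [h]
  have hx : η ^ 2 * (x - a) ^ 2 ≤ 1 := by
    rw [← mul_pow, ← sq_abs]
    exact pow_le_one₀ (abs_nonneg _) (not_lt.1 (mt (hρsupp _) h))
  have hmin : 0 < min a (1 - a) := lt_min ha.1 (sub_pos.2 ha.2)
  have hΛ : 0 ≤ Λ := by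
    refine le_trans ?_ hi
    rcases i with p | q <;> simp only [splitEigenvalue, Sum.elim_inl, Sum.elim_inr] <;> positivity
  have hsq : splitMode a i x ^ 2 ≤ 2 * Λ / (min a (1 - a) * η ^ 2) :=
    calc splitMode a i x ^ 2 ≤ 2 / min a (1 - a) * splitEigenvalue a i * (x - a) ^ 2 :=
          sq_splitMode_le ha i x
      _ ≤ 2 / min a (1 - a) * Λ * (x - a) ^ 2 := by gcongr
      _ = 2 * Λ / (min a (1 - a) * η ^ 2) * (η ^ 2 * (x - a) ^ 2) := by field_simp
      _ ≤ 2 * Λ / (min a (1 - a) * η ^ 2) := mul_le_of_le_one_right (by positivity) hx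
  rw [mul_comm]
  exact mul_le_mul_of_nonneg_right hsq (mul_nonneg (by positivity) (hρ0 _))

end Bump

theorem stmt_5_general
    (ρ : ℝ → ℝ) (hρ0 : ∀ x, 0 ≤ ρ x)
    (hρsupp : ∀ x : ℝ, 1 < |x| → ρ x = 0)
    (hρint : ∫ x : ℝ, ρ x = 1)
    (a η I : ℝ) (ha : a ∈ Set.Ioo (0 : ℝ) 1) (hη : 0 < η) (hI : 0 ≤ I)
    (P Q : Finset ℕ) (hP : ∀ p ∈ P, 0 < p) (hQ : ∀ q ∈ Q, 0 < q)
    (k : ℕ) (hk : k = P.card + Q.card)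
    (Λ : ℝ)
    (hΛ : IsGreatest
      (((fun p : ℕ => (p : ℝ) ^ 2 * Real.pi ^ 2 / a ^ 2) '' (P : Set ℕ)) ∪
        ((fun q : ℕ => (q : ℝ) ^ 2 * Real.pi ^ 2 / (1 - a) ^ 2) '' (Q : Set ℕ))) Λ)
    (b c : ℕ → ℂ) (u g : ℝ → ℂ)
    (hu : ∀ x : ℝ, u x =
      (∑ p ∈ P, b p *
        (if 0 ≤ x ∧ x ≤ a then
          ((Real.sqrt (2 / a) * Real.sin (p * Real.pi * x / a) : ℝ) : ℂ) else 0)) +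
      (∑ q ∈ Q, c q *
        (if a ≤ x ∧ x ≤ 1 then
          ((Real.sqrt (2 / (1 - a)) *
            Real.sin (q * Real.pi * (1 - x) / (1 - a)) : ℝ) : ℂ) else 0)))
    (hg : ∀ x : ℝ, g x =
      (∑ p ∈ P, b p *
        (if 0 < x ∧ x < a then
          ((Real.sqrt (2 / a) * (p * Real.pi / a) *
            Real.cos (p * Real.pi * x / a) : ℝ) : ℂ) else 0)) -
      (∑ q ∈ Q, c q *
        (if a < x ∧ x < 1 then
          ((Real.sqrt (2 / (1 - a)) * (q * Real.pi / (1 - a)) *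
            Real.cos (q * Real.pi * (1 - x) / (1 - a)) : ℝ) : ℂ) else 0))) :
    (∫ x in (0 : ℝ)..1, (‖g x‖ ^ 2 + I * η * ρ (η * (x - a)) * ‖u x‖ ^ 2)) ≤
      Λ * (1 + 2 * k * I / (min a (1 - a) * η ^ 2)) *
        ∫ x in (0 : ℝ)..1, ‖u x‖ ^ 2 := by
  obtain rfl : u = _ := funext fun x => (hu x).trans (sum_disjSum_splitMode b c x).symm
  obtain rfl : g = _ := funext fun x => (hg x).trans (sum_disjSum_splitModeDeriv b c x).symm
  have hΛμ := splitEigenvalue_le_of_isGreatest hΛ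
  have hΛ0 : 0 ≤ Λ := by rcases hΛ.1 with ⟨p, -, rfl⟩ | ⟨q, -, rfl⟩ <;> positivity
  have hmin : 0 < min a (1 - a) := lt_min ha.1 (sub_pos.2 ha.2)
  simp only [intervalIntegral.integral_of_le zero_le_one]
  refine (integral_energy_le (W := fun x => I * η * ρ (η * (x - a)))
    (isL2Orthogonal_splitMode ha hP hQ) (isL2Orthogonal_splitModeDeriv ha hP hQ)
    (fun i _ j _ => (intervalIntegrable_splitMode_mul i j 0 1).1)
    (fun i _ j _ => (intervalIntegrable_splitModeDeriv_mul i j 0 1).1) hΛμ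
    (fun x => mul_nonneg (by positivity) (hρ0 _)) ?_
    (setIntegral_mul_comp_mul_sub_le hρ0 hρint hη hI a _)
    (div_nonneg (by linarith) (by positivity))
    (fun i hi x => mul_sq_splitMode_le hρ0 hρsupp hη hI ha (hΛμ i hi) x) (Sum.elim b c)).trans_eq ?_
  · exact ((integrable_comp_mul_sub hρint hη.ne' a).const_mul (I * η)).restrict
  · rw [Finset.card_disjSum, ← hk]
    congr 1
    field_simp

/-- Rayleigh-quotient bound on the span of the first split-Laplacian eigenmodes:
for `u = Σ_{p∈P} b_p φ_p^l + Σ_{q∈Q} c_q φ_q^r` with a.e. derivative `g`,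
`∫₀¹ (|g|² + I·η·ρ(η(x-a))·|u|²) ≤ Λ·(1 + 2kI/(min(a,1-a)η²))·∫₀¹ |u|²`. -/
theorem stmt_5
    (ρ : ℝ → ℝ) (hρc : Continuous ρ) (hρ0 : ∀ x, 0 ≤ ρ x)
    (hρsupp : ∀ x : ℝ, 1 < |x| → ρ x = 0)
    (hρint : ∫ x : ℝ, ρ x = 1)
    (a η I : ℝ) (ha : a ∈ Set.Ioo (0 : ℝ) 1) (hη : 0 < η) (hI : 0 ≤ I)
    (P Q : Finset ℕ) (hP : ∀ p ∈ P, 0 < p) (hQ : ∀ q ∈ Q, 0 < q)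
    (k : ℕ) (hk : k = P.card + Q.card) (hk1 : 1 ≤ k)
    (Λ : ℝ)
    (hΛ : IsGreatest
      (((fun p : ℕ => (p : ℝ) ^ 2 * Real.pi ^ 2 / a ^ 2) '' (P : Set ℕ)) ∪
        ((fun q : ℕ => (q : ℝ) ^ 2 * Real.pi ^ 2 / (1 - a) ^ 2) '' (Q : Set ℕ))) Λ)
    (b c : ℕ → ℂ) (u g : ℝ → ℂ)
    (hu : ∀ x : ℝ, u x =
      (∑ p ∈ P, b p *
        (if 0 ≤ x ∧ x ≤ a then
          ((Real.sqrt (2 / a) * Real.sin (p * Real.pi * x / a) : ℝ) : ℂ) else 0)) +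
      (∑ q ∈ Q, c q *
        (if a ≤ x ∧ x ≤ 1 then
          ((Real.sqrt (2 / (1 - a)) *
            Real.sin (q * Real.pi * (1 - x) / (1 - a)) : ℝ) : ℂ) else 0)))
    (hg : ∀ x : ℝ, g x =
      (∑ p ∈ P, b p *
        (if 0 < x ∧ x < a then
          ((Real.sqrt (2 / a) * (p * Real.pi / a) *
            Real.cos (p * Real.pi * x / a) : ℝ) : ℂ) else 0)) -
      (∑ q ∈ Q, c q *
        (if a < x ∧ x < 1 then
          ((Real.sqrt (2 / (1 - a)) * (q * Real.pi / (1 - a)) *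
            Real.cos (q * Real.pi * (1 - x) / (1 - a)) : ℝ) : ℂ) else 0))) :
    (∫ x in (0 : ℝ)..1, (‖g x‖ ^ 2 + I * η * ρ (η * (x - a)) * ‖u x‖ ^ 2)) ≤
      Λ * (1 + 2 * k * I / (min a (1 - a) * η ^ 2)) *
        ∫ x in (0 : ℝ)..1, ‖u x‖ ^ 2 :=
  stmt_5_general ρ hρ0 hρsupp hρint a η I ha hη hI P Q hP hQ k hk Λ hΛ b c u g hu hg
end

section
/- Let M ≥ 0 and let f : [0,1] → ℂ satisfy |f(x)−f(y)| ≤ M·|x−y|^{1/2} for all x, y ∈ [0,1]. Let ρ : ℝ → ℝ be continuous and nonnegative with ρ(x) = 0 for |x| > 1 and ∫_ℝ ρ = 1. Let η ≥ 1 and a ∈ (0,1) with 1/η ≤ a ≤ 1 − 1/η, let I > 0, and suppose that I·∫₀¹ η·ρ(η(x−a))·|f(x)|² dx ≤ C for some C ≥ 0. Then for every x ∈ [a − 1/η, a + 1/η] ∩ [0,1], |f(x)| ≤ √(2C/I + 2M²/η) + M/√η. (Thus an eigenfunction whose energy form is bounded by C is small, of order 1/min(√I, √η), throughout the support interval of the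 potential wall.) -/
open MeasureTheory Set

private lemma alg_lemma {u t : ℝ} (hu : 0 ≤ u) (ht : 0 ≤ t) :
    u + Real.sqrt 2 * t ≤ Real.sqrt (2 * u ^ 2 + 2 * t ^ 2) + t := by
  have hr2 : Real.sqrt 2 ^ 2 = 2 := Real.sq_sqrt (by norm_num)
  have hr1 : (1 : ℝ) ≤ Real.sqrt 2 := by
    nlinarith [Real.sqrt_nonneg 2]
  have key : u + (Real.sqrt 2 - 1) * t ≤ Real.sqrt (2 * u ^ 2 + 2 * t ^ 2) := by
    apply Real.le_sqrt_of_sq_le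
    nlinarith [sq_nonneg (u - (Real.sqrt 2 - 1) * t), sq_nonneg t,
      mul_nonneg (mul_nonneg (sub_nonneg.2 hr1) ht) ht]
  linarith

/-- A ½-Hölder function whose weighted energy against the potential wall is bounded by `C`
is small throughout the support interval `[a-1/η, a+1/η]` of the wall:
`|f(x)| ≤ √(2C/I + 2M²/η) + M/√η`. -/
theorem stmt_7
    (M : ℝ) (hM : 0 ≤ M) (f : ℝ → ℂ)
    (hf : ∀ x ∈ Set.Icc (0 : ℝ) 1, ∀ y ∈ Set.Icc (0 : ℝ) 1,
      ‖f x - f y‖ ≤ M * Real.sqrt |x - y|)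
    (ρ : ℝ → ℝ) (hρc : Continuous ρ) (hρ0 : ∀ x, 0 ≤ ρ x)
    (hρsupp : ∀ x : ℝ, 1 < |x| → ρ x = 0)
    (hρint : ∫ x : ℝ, ρ x = 1)
    (η : ℝ) (hη : 1 ≤ η) (a : ℝ) (ha : a ∈ Set.Ioo (0 : ℝ) 1)
    (ha1 : 1 / η ≤ a) (ha2 : a ≤ 1 - 1 / η)
    (I : ℝ) (hI : 0 < I) (C : ℝ) (hC : 0 ≤ C)
    (hen : I * (∫ x in (0 : ℝ)..1, η * ρ (η * (x - a)) * ‖f x‖ ^ 2) ≤ C) :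
    ∀ x ∈ Set.Icc (a - 1 / η) (a + 1 / η) ∩ Set.Icc (0 : ℝ) 1,
      ‖f x‖ ≤ Real.sqrt (2 * C / I + 2 * M ^ 2 / η) + M / Real.sqrt η := by
  have hη0 : (0 : ℝ) < η := lt_of_lt_of_le one_pos hη
  have hη0' : η ≠ 0 := ne_of_gt hη0
  have hinv : (0 : ℝ) < 1 / η := by positivity
  -- ρ vanishes on |x| ≥ 1 (by continuity at the boundary)
  have hρsupp' : ∀ x : ℝ, 1 ≤ |x| → ρ x = 0 := by
    intro x hx
    rcases lt_or_eq_of_le hx with h | h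
    · exact hρsupp x h
    · -- |x| = 1; approximate from outside
      have hx0 : x ≠ 0 := by intro h0; rw [h0] at h; simp at h
      have htend : Filter.Tendsto (fun n : ℕ => ρ (x * (1 + 1 / (n + 1))))
          Filter.atTop (nhds (ρ x)) := by
        have h1 : Filter.Tendsto (fun n : ℕ => x * (1 + 1 / (n + 1 : ℝ)))
            Filter.atTop (nhds x) := by
          have := Filter.Tendsto.const_mul x
            ((tendsto_one_div_add_atTop_nhds_zero_nat).const_add 1)
          simpa using this
        exact (hρc.tendsto x).comp h1
      have hzero : ∀ n : ℕ, ρ (x * (1 + 1 / (n + 1))) = 0 := by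
        intro n
        apply hρsupp
        have hpos : (1 : ℝ) < 1 + 1 / (n + 1 : ℝ) := by
          have : (0:ℝ) < 1 / (n + 1 : ℝ) := by positivity
          linarith
        rw [abs_mul, abs_of_pos (by positivity : (0:ℝ) < 1 + 1 / (n + 1 : ℝ)), ← h, one_mul]
        exact hpos
      exact tendsto_nhds_unique (htend.congr (fun n => (hzero n))) tendsto_const_nhds
  -- f is continuous on [0,1]
  have hfc : ContinuousOn f (Icc (0:ℝ) 1) := by
    intro x hx
    rw [Metric.continuousWithinAt_iff]
    intro ε hε
    refine ⟨(ε / (M + 1)) ^ 2, by positivity, fun y hy hd => ?_⟩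
    have h1 : ‖f y - f x‖ ≤ M * Real.sqrt |y - x| := hf y hy x hx
    have h2 : Real.sqrt |y - x| ≤ ε / (M + 1) := by
      have : |y - x| ≤ (ε / (M + 1)) ^ 2 := by
        rw [Real.dist_eq] at hd; exact hd.le
      calc Real.sqrt |y - x| ≤ Real.sqrt ((ε / (M + 1)) ^ 2) := Real.sqrt_le_sqrt this
        _ = ε / (M + 1) := Real.sqrt_sq (by positivity)
    have : dist (f y) (f x) ≤ M * (ε / (M + 1)) := by
      rw [dist_eq_norm]
      exact h1.trans (mul_le_mul_of_nonneg_left h2 hM)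
    have hlt : M * (ε / (M + 1)) < ε := by
      rw [mul_div_assoc']
      rw [div_lt_iff₀ (by positivity)]
      nlinarith
    linarith
  -- the support interval is inside [0,1]
  have hS1 : (0:ℝ) ≤ a - 1 / η := by linarith
  have hS2 : a + 1 / η ≤ 1 := by linarith
  have hSsub : Icc (a - 1 / η) (a + 1 / η) ⊆ Icc (0:ℝ) 1 := by
    intro z hz; exact ⟨le_trans hS1 hz.1, le_trans hz.2 hS2⟩
  -- weight vanishes outside the interval
  have hwzero : ∀ x : ℝ, x ∉ Icc (a - 1 / η) (a + 1 / η) → ρ (η * (x - a)) = 0 := by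
    intro x hx
    apply hρsupp
    rw [abs_mul, abs_of_pos hη0]
    simp only [Set.mem_Icc, not_and_or, not_le] at hx
    rcases hx with h | h
    · have : 1 / η < |x - a| := by rw [abs_sub_comm]; rw [lt_abs]; left; linarith
      calc (1:ℝ) = η * (1 / η) := by field_simp
        _ < η * |x - a| := by exact (mul_lt_mul_iff_right₀ hη0).2 this
    · have : 1 / η < |x - a| := by rw [lt_abs]; left; linarith
      calc (1:ℝ) = η * (1 / η) := by field_simp
        _ < η * |x - a| := by exact (mul_lt_mul_iff_right₀ hη0).2 this
  -- integral of the weight is 1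
  have hweight : ∫ x in (0:ℝ)..1, η * ρ (η * (x - a)) = 1 := by
    have h1 : ∫ x in (0:ℝ)..1, ρ (η * (x - a)) =
        ∫ x in (0:ℝ) - a..1 - a, ρ (η * x) :=
      intervalIntegral.integral_comp_sub_right (fun u => ρ (η * u)) a
    have h2 : ∫ x in (0:ℝ) - a..1 - a, ρ (η * x) =
        η⁻¹ • ∫ x in η * ((0:ℝ) - a)..η * (1 - a), ρ x :=
      intervalIntegral.integral_comp_mul_left ρ hη0'
    have hbig : ∫ x in η * ((0:ℝ) - a)..η * (1 - a), ρ x = 1 := by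
      have hle : η * ((0:ℝ) - a) ≤ η * (1 - a) := by nlinarith
      have hlo : η * ((0:ℝ) - a) ≤ -1 := by
        have : 1 ≤ η * a := by
          rw [div_le_iff₀ hη0] at ha1; linarith
        nlinarith
      have hhi : (1:ℝ) ≤ η * (1 - a) := by
        have : 1 / η ≤ 1 - a := by linarith
        rw [div_le_iff₀ hη0] at this; nlinarith
      have hcompl : ∀ x ∉ Set.Ioc (η * ((0:ℝ) - a)) (η * (1 - a)), ρ x = 0 := by
        intro x hx
        apply hρsupp'
        simp only [Set.mem_Ioc, not_and_or, not_lt, not_le] at hx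
        rcases hx with h | h
        · rw [le_abs]; right; linarith
        · rw [le_abs]; left; linarith
      rw [intervalIntegral.integral_of_le hle,
        setIntegral_eq_integral_of_forall_compl_eq_zero hcompl, hρint]
    rw [intervalIntegral.integral_const_mul, h1, h2, hbig]
    simp [smul_eq_mul]
    field_simp
  -- minimum of ‖f‖ on the support interval
  have hne : (a - 1/η) ≤ (a + 1/η) := by linarith
  obtain ⟨y₀, hy₀S, hy₀min⟩ := (isCompact_Icc :
      IsCompact (Icc (a - 1/η) (a + 1/η))).exists_isMinOn
    (Set.nonempty_Icc.2 hne)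
    (((continuous_norm.comp_continuousOn hfc)).mono hSsub)
  set m := ‖f y₀‖ with hm
  have hm0 : 0 ≤ m := norm_nonneg _
  -- integrability
  have hcw : Continuous (fun x => η * ρ (η * (x - a))) := by
    exact continuous_const.mul (hρc.comp (continuous_const.mul (continuous_id.sub continuous_const)))
  have hIcc : Set.uIcc (0:ℝ) 1 = Icc (0:ℝ) 1 := Set.uIcc_of_le zero_le_one
  have hint1 : IntervalIntegrable (fun x => η * ρ (η * (x - a)) * m ^ 2)
      volume 0 1 := by
    apply ContinuousOn.intervalIntegrable
    exact ((hcw.continuousOn).mul continuousOn_const)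
  have hint2 : IntervalIntegrable (fun x => η * ρ (η * (x - a)) * ‖f x‖ ^ 2)
      volume 0 1 := by
    apply ContinuousOn.intervalIntegrable
    rw [hIcc]
    exact (hcw.continuousOn).mul (((continuous_norm.comp_continuousOn hfc)).pow 2)
  -- m^2 ≤ energy
  have hmono : m ^ 2 ≤ ∫ x in (0:ℝ)..1, η * ρ (η * (x - a)) * ‖f x‖ ^ 2 := by
    have h0 : ∫ x in (0:ℝ)..1, η * ρ (η * (x - a)) * m ^ 2 = m ^ 2 := by
      rw [intervalIntegral.integral_mul_const, hweight, one_mul]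
    rw [← h0]
    apply intervalIntegral.integral_mono_on zero_le_one hint1 hint2
    intro x hx
    by_cases hxS : x ∈ Icc (a - 1/η) (a + 1/η)
    · have h1 : m ≤ ‖f x‖ := hy₀min hxS
      have h2 : 0 ≤ η * ρ (η * (x - a)) := mul_nonneg hη0.le (hρ0 _)
      exact mul_le_mul_of_nonneg_left (by nlinarith) h2
    · simp [hwzero x hxS]
  have henergy : m ^ 2 ≤ C / I := by
    rw [le_div_iff₀ hI, mul_comm]
    exact le_trans (mul_le_mul_of_nonneg_left hmono hI.le) hen
  have hmsqrt : m ≤ Real.sqrt (C / I) := Real.le_sqrt_of_sq_le henergy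
  -- conclusion
  intro x hx
  obtain ⟨hxS, hx01⟩ := hx
  have hdiff : ‖f x‖ ≤ m + M * Real.sqrt |x - y₀| := by
    have h1 : ‖f x - f y₀‖ ≤ M * Real.sqrt |x - y₀| :=
      hf x hx01 y₀ (hSsub hy₀S)
    calc ‖f x‖ = ‖f y₀ + (f x - f y₀)‖ := by ring_nf
      _ ≤ ‖f y₀‖ + ‖f x - f y₀‖ := norm_add_le _ _
      _ ≤ m + M * Real.sqrt |x - y₀| := by rw [hm]; linarith
  have hdist : |x - y₀| ≤ 2 / η := by
    have h2η : (2:ℝ) / η = 1 / η + 1 / η := by ring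
    rw [abs_sub_le_iff]
    constructor
    · have := hxS.2; have := hy₀S.1; linarith
    · have := hxS.1; have := hy₀S.2; linarith
  have hsq : Real.sqrt |x - y₀| ≤ Real.sqrt 2 / Real.sqrt η := by
    calc Real.sqrt |x - y₀| ≤ Real.sqrt (2 / η) := Real.sqrt_le_sqrt hdist
      _ = Real.sqrt 2 / Real.sqrt η := Real.sqrt_div (by norm_num) η
  have hsqη : (0:ℝ) < Real.sqrt η := Real.sqrt_pos.2 hη0
  have step : ‖f x‖ ≤ Real.sqrt (C / I) + Real.sqrt 2 * (M / Real.sqrt η) := by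
    calc ‖f x‖ ≤ m + M * Real.sqrt |x - y₀| := hdiff
      _ ≤ Real.sqrt (C / I) + M * (Real.sqrt 2 / Real.sqrt η) := by
          have := mul_le_mul_of_nonneg_left hsq hM; linarith
      _ = Real.sqrt (C / I) + Real.sqrt 2 * (M / Real.sqrt η) := by ring
  refine step.trans ?_
  have halg := alg_lemma (Real.sqrt_nonneg (C / I)) (by positivity : (0:ℝ) ≤ M / Real.sqrt η)
  have hrw : 2 * Real.sqrt (C / I) ^ 2 + 2 * (M / Real.sqrt η) ^ 2
      = 2 * C / I + 2 * M ^ 2 / η := by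
    rw [Real.sq_sqrt (by positivity : (0:ℝ) ≤ C / I)]
    rw [div_pow, Real.sq_sqrt hη0.le]
    ring
  rw [hrw] at halg
  exact halg
end

section
/- Let χ : ℝ → ℝ be twice continuously differentiable with χ(s) = 0 for s ≥ −1 and χ(s) = 1 for s ≤ −2, and let a₀ ∈ (0,1). There exists a constant C > 0, depending only on χ and a₀, such that for every p ∈ ℕ*, every a ∈ [a₀, 1), and every α with 0 < 2α ≤ a₀, the function Ψ(a,x) = √(2/a)·sin(pπx/a)·χ_α(x−a) (extended by the same formula for x ∈ [0,1], with χ_α(s) = χ(s/α)) satisfies ( ∫₀¹ |∂_a Ψ(a,x)|² dx )^{1/2} ≤ C·p. (Hence if the wall position a(t) moves with speed |a'(t)| ≤ κ, the time derivative of the moving truncated mode ψ_k^{a(t)} has L² norm O(p·κ).) -/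
open Real Set
open scoped Interval

/-!
Differentiating `Ψ(a, x)` in `a` gives three terms. Those coming from the normalisation
`√(2/a)` and from the frequency `pπ/a` are `O(p)` uniformly for `a ≥ a₀` and `x ∈ [0, 1]`.
The cutoff term carries a factor `1/α`, but it lives where `|x - a| ≤ 2α`, and there the
eigenfunction vanishes to first order at the wall: `|sin (pπx/a)| ≤ pπ|x - a|/a ≤ 2pπα/a₀`,
which cancels the `1/α`. The pointwise bound `|∂ₐΨ| ≤ C p` on `[0, 1]` gives the `L²` bound.
-/

lemma exists_forall_abs_le_of_abs_le_outside {f : ℝ → ℝ} (hf : Continuous f) {l u M : ℝ}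
    (h : ∀ s ∉ Icc l u, |f s| ≤ M) : ∃ B, ∀ s, |f s| ≤ B := by
  obtain ⟨B, hB⟩ := isCompact_Icc.exists_bound_of_continuousOn (s := Icc l u) hf.continuousOn
  refine ⟨max B M, fun s => ?_⟩
  by_cases hs : s ∈ Icc l u
  · exact (hB s hs).trans (le_max_left _ _)
  · exact (h s hs).trans (le_max_right _ _)

lemma deriv_eq_zero_of_notMem_Icc {f : ℝ → ℝ} {l u c₀ c₁ : ℝ}
    (h₀ : ∀ s, u ≤ s → f s = c₀) (h₁ : ∀ s, s ≤ l → f s = c₁) (s : ℝ) (hs : s ∉ Icc l u) :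
    deriv f s = 0 := by
  rcases not_and_or.mp hs with hs | hs
  · have : f =ᶠ[nhds s] fun _ => c₁ := by
      filter_upwards [Iio_mem_nhds (not_le.mp hs)] with t ht using h₁ t ht.le
    rw [this.deriv_eq, deriv_const]
  · have : f =ᶠ[nhds s] fun _ => c₀ := by
      filter_upwards [Ioi_mem_nhds (not_le.mp hs)] with t ht using h₀ t ht.le
    rw [this.deriv_eq, deriv_const]

lemma sqrt_intervalIntegral_sq_le {f : ℝ → ℝ} {a b B : ℝ} (hB : 0 ≤ B)
    (hf : ∀ x ∈ Ι a b, |f x| ≤ B) : √(∫ x in a..b, f x ^ 2) ≤ B * √|b - a| := by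
  have hint : ‖∫ x in a..b, f x ^ 2‖ ≤ B ^ 2 * |b - a| :=
    intervalIntegral.norm_integral_le_of_norm_le_const fun x hx => by
      rw [norm_pow, Real.norm_eq_abs]
      exact pow_le_pow_left₀ (abs_nonneg _) (hf x hx) 2
  calc √(∫ x in a..b, f x ^ 2) ≤ √(B ^ 2 * |b - a|) :=
        sqrt_le_sqrt ((le_abs_self _).trans hint)
    _ = B * √|b - a| := by rw [sqrt_mul (sq_nonneg _), sqrt_sq hB]

lemma abs_sin_nat_mul_pi_div_le (p : ℕ) {a : ℝ} (ha : 0 < a) (x : ℝ) :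
    |sin (p * π * x / a)| ≤ p * π / a * |x - a| := by
  have h : p * π * x / a = p * π / a * (x - a) + p * π := by field_simp; ring
  rw [h, sin_add_nat_mul_pi, abs_mul, abs_pow, abs_neg, abs_one, one_pow, one_mul]
  calc _ ≤ |p * π / a * (x - a)| := abs_sin_le_abs
    _ = _ := by rw [abs_mul, abs_of_nonneg (by positivity)]

lemma abs_sin_mul_comp_div_le {g : ℝ → ℝ} {M : ℝ} (hM : ∀ s, |g s| ≤ M)
    (hg : ∀ s ∉ Icc (-2) (-1), g s = 0) (p : ℕ) {a α : ℝ} (ha : 0 < a) (hα : 0 < α) (x : ℝ) :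
    |sin (p * π * x / a) * g ((x - a) / α) / α| ≤ 2 * π * M / a * p := by
  have hM0 : 0 ≤ M := (abs_nonneg _).trans (hM 0)
  by_cases hc : (x - a) / α ∈ Icc (-2) (-1)
  · have hxa : |x - a| ≤ 2 * α := by
      rw [mem_Icc, le_div_iff₀ hα, div_le_iff₀ hα] at hc
      exact abs_le.mpr ⟨by linarith [hc.1], by linarith [hc.2]⟩
    calc |sin (p * π * x / a) * g ((x - a) / α) / α|
        = |sin (p * π * x / a)| * |g ((x - a) / α)| / α := by
          rw [abs_div, abs_mul, abs_of_pos hα]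
      _ ≤ p * π / a * (2 * α) * M / α := by
          gcongr
          · exact (abs_sin_nat_mul_pi_div_le p ha x).trans (by gcongr)
          · exact hM _
      _ = 2 * π * M / a * p := by field_simp
  · rw [hg _ hc, mul_zero, zero_div, abs_zero]
    positivity

noncomputable def truncatedMode (χ : ℝ → ℝ) (k α a x : ℝ) : ℝ :=
  √(2 / a) * sin (k * x / a) * χ ((x - a) / α)

lemma hasDerivAt_sqrt_two_div {a : ℝ} (ha : 0 < a) :
    HasDerivAt (fun a' => √(2 / a')) (-√(2 / a) / (2 * a)) a := by
  refine (((hasDerivAt_const a (2 : ℝ)).div (hasDerivAt_id a) ha.ne').sqrt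
    (div_ne_zero two_ne_zero ha.ne')).congr_deriv ?_
  have hs : √(2 / a) ^ 2 = 2 / a := sq_sqrt (by positivity)
  simp only [id, Pi.div_apply]
  field_simp
  rw [hs]
  field_simp
  ring

lemma hasDerivAt_truncatedMode {χ : ℝ → ℝ} {k α a x : ℝ} (ha : 0 < a)
    (hχ : DifferentiableAt ℝ χ ((x - a) / α)) :
    HasDerivAt (truncatedMode χ k α · x)
      (-√(2 / a) * ((sin (k * x / a) / (2 * a) + k * x * cos (k * x / a) / a ^ 2)
        * χ ((x - a) / α) + sin (k * x / a) * deriv χ ((x - a) / α) / α)) a := by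
  have hfreq : HasDerivAt (fun a' => k * x / a') (-(k * x) / a ^ 2) a :=
    ((hasDerivAt_const a (k * x)).div (hasDerivAt_id a) ha.ne').congr_deriv (by simp)
  have hcut : HasDerivAt (fun a' => (x - a') / α) (-1 / α) a :=
    (((hasDerivAt_const a x).sub (hasDerivAt_id a)).div_const α).congr_deriv (by simp)
  refine (((hasDerivAt_sqrt_two_div ha).mul hfreq.sin).mul
    (hχ.hasDerivAt.comp a hcut)).congr_deriv ?_
  simp only [Function.comp, Pi.mul_apply]
  field_simp
  ring

lemma abs_deriv_truncatedMode_le {χ : ℝ → ℝ} (hχ : Differentiable ℝ χ) {M₀ M₁ : ℝ}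
    (hM₀ : ∀ s, |χ s| ≤ M₀) (hM₁ : ∀ s, |deriv χ s| ≤ M₁)
    (hχ' : ∀ s ∉ Icc (-2) (-1), deriv χ s = 0) {p : ℕ} (hp : 0 < p) {a₀ a α x : ℝ}
    (ha₀ : 0 < a₀) (ha : a₀ ≤ a) (hα : 0 < α) (hx : x ∈ Icc 0 1) :
    |deriv (truncatedMode χ (p * π) α · x) a| ≤
      √(2 / a₀) * ((1 / (2 * a₀) + π / a₀ ^ 2) * M₀ + 2 * π * M₁ / a₀) * p := by
  have ha0 : 0 < a := ha₀.trans_le ha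
  have hp1 : (1 : ℝ) ≤ p := by exact_mod_cast hp
  have hM₀0 : 0 ≤ M₀ := (abs_nonneg _).trans (hM₀ 0)
  set θ := p * π * x / a
  have hsmooth : |(sin θ / (2 * a) + p * π * x * cos θ / a ^ 2) * χ ((x - a) / α)| ≤
      (1 / (2 * a₀) + π / a₀ ^ 2) * M₀ * p := by
    have hsin : |sin θ / (2 * a)| ≤ 1 / (2 * a₀) * p := by
      rw [abs_div, abs_of_pos (by positivity : (0 : ℝ) < 2 * a)]
      calc |sin θ| / (2 * a) ≤ 1 / (2 * a₀) := by gcongr; exact abs_sin_le_one θ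
        _ ≤ 1 / (2 * a₀) * p := le_mul_of_one_le_right (by positivity) hp1
    have hcos : |p * π * x * cos θ / a ^ 2| ≤ π / a₀ ^ 2 * p := by
      rw [abs_div, abs_mul, abs_of_nonneg (mul_nonneg (by positivity) hx.1),
        abs_of_pos (by positivity : 0 < a ^ 2)]
      calc p * π * x * |cos θ| / a ^ 2 ≤ p * π * 1 * 1 / a₀ ^ 2 := by
            gcongr
            · exact hx.2
            · exact abs_cos_le_one θ
        _ = π / a₀ ^ 2 * p := by ring
    rw [abs_mul]
    calc _ ≤ (1 / (2 * a₀) * p + π / a₀ ^ 2 * p) * M₀ :=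
          mul_le_mul ((abs_add_le _ _).trans (add_le_add hsin hcos)) (hM₀ _) (abs_nonneg _)
            (by positivity)
      _ = _ := by ring
  have hcut : |sin θ * deriv χ ((x - a) / α) / α| ≤ 2 * π * M₁ / a₀ * p :=
    (abs_sin_mul_comp_div_le hM₁ hχ' p ha0 hα x).trans
      (by have hM₁0 := (abs_nonneg _).trans (hM₁ 0); gcongr)
  rw [(hasDerivAt_truncatedMode ha0 hχ.differentiableAt).deriv, abs_mul, abs_neg,
    abs_of_nonneg (sqrt_nonneg _), mul_assoc √(2 / a₀)]
  refine mul_le_mul (sqrt_le_sqrt (by gcongr)) ?_ (abs_nonneg _) (sqrt_nonneg _)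
  calc _ ≤ _ := abs_add_le _ _
    _ ≤ (1 / (2 * a₀) + π / a₀ ^ 2) * M₀ * p + 2 * π * M₁ / a₀ * p := add_le_add hsmooth hcut
    _ = _ := by ring

/-- Uniform `L²` bound on the `a`-derivative of the moving truncated eigenmode
`Ψ(a,x) = √(2/a)·sin(pπx/a)·χ((x-a)/α)`: there is `C = C(χ, a₀) > 0` with
`‖∂_a Ψ(a,·)‖_{L²(0,1)} ≤ C·p` for all `p ∈ ℕ*`, `a ∈ [a₀,1)`, `0 < 2α ≤ a₀`. -/
theorem stmt_12
    (χ : ℝ → ℝ) (hχ : ContDiff ℝ 2 χ)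
    (hχ0 : ∀ s : ℝ, -1 ≤ s → χ s = 0)
    (hχ1 : ∀ s : ℝ, s ≤ -2 → χ s = 1)
    (a₀ : ℝ) (ha₀ : a₀ ∈ Set.Ioo (0 : ℝ) 1) :
    ∃ C : ℝ, 0 < C ∧
      ∀ p : ℕ, 0 < p → ∀ a : ℝ, a ∈ Set.Ico a₀ 1 → ∀ α : ℝ, 0 < α → 2 * α ≤ a₀ →
        Real.sqrt (∫ x in (0 : ℝ)..1,
            (deriv (fun a' : ℝ =>
              Real.sqrt (2 / a') * Real.sin (p * Real.pi * x / a') * χ ((x - a') / α)) a) ^ 2) ≤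
          C * p := by
  have hχ' := deriv_eq_zero_of_notMem_Icc hχ0 hχ1
  obtain ⟨M₀, hM₀⟩ := exists_forall_abs_le_of_abs_le_outside hχ.continuous (M := 1)
    fun s hs => by
      rcases not_and_or.mp hs with hs | hs
      · rw [hχ1 s (not_le.mp hs).le, abs_one]
      · rw [hχ0 s (not_le.mp hs).le, abs_zero]; exact zero_le_one
  obtain ⟨M₁, hM₁⟩ := exists_forall_abs_le_of_abs_le_outside (hχ.continuous_deriv one_le_two)
    (M := 0) fun s hs => by rw [hχ' s hs, abs_zero]
  have hM₀1 : 1 ≤ M₀ := by simpa [hχ1 (-2) le_rfl] using hM₀ (-2)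
  have hM₁0 : 0 ≤ M₁ := (abs_nonneg _).trans (hM₁ 0)
  have ha₀0 := ha₀.1
  refine ⟨√(2 / a₀) * ((1 / (2 * a₀) + π / a₀ ^ 2) * M₀ + 2 * π * M₁ / a₀),
    by have hM₀0 := zero_lt_one.trans_le hM₀1; positivity, fun p hp a ha α hα _ => ?_⟩
  have hbound := sqrt_intervalIntegral_sq_le (a := 0) (b := 1) (by positivity) fun x hx =>
    abs_deriv_truncatedMode_le (hχ.differentiable two_ne_zero) hM₀ hM₁ hχ' hp ha₀0 ha.1 hα
      (Ioc_subset_Icc_self (by simpa using hx))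
  rwa [sub_zero, abs_one, sqrt_one, mul_one] at hbound
end

section
/- Let t₁ < t₂ be reals and V : [t₁,t₂] × [0,1] → ℝ be continuous. Let u : [t₁,t₂] × [0,1] → ℂ be continuous, once continuously differentiable in t and twice continuously differentiable in x, satisfying the Dirichlet conditions u(t,0) = u(t,1) = 0 for all t and the Schrödinger equation i·∂_t u(t,x) = −∂²ₓₓ u(t,x) + V(t,x)·u(t,x) on [t₁,t₂] × [0,1]. Let ψ : [t₁,t₂] × [0,1] → ℂ have the same regularity, satisfy ψ(t,0) = ψ(t,1) = 0 for all t, and satisfy V(t,x)·ψ(t,x) = 0 for all (t,x) (ψ vanishes on the support of the potential). Suppose K₁, K₂, K₃ ≥ 0 are such that for all t ∈ [t₁,t₂]: (∫₀¹|∂²ₓₓψ(t,x)|²dx)^{1/2} ≤ K₁, (∫₀¹|∂_tψ(t,x)|²dx)^{1/2} ≤ K₂, and (∫₀¹|ψ(t,x)|²dx)^{1/2} ≤ K₃. Set A = (∫₀¹|u(t₁,x)|²dx)^{1/2}. Then for all t ∈ [t₁,t₂]: ∫₀¹ |u(t,x) − ψ(t,x)|² dx ≤ ∫₀¹ |u(t₁,x)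 − ψ(t₁,x)|² dx + 2·( A·K₁ + (K₃ + A)·K₂ )·(t − t₁). -/
/-!
Put `w = u - ψ`. Then `d/dt ‖w‖² = 2 Re ∫ conj w ∂ₜw` splits into four pairings. The pairing of
`u` with `∂ₜu` has zero real part, because `-∂²ₓₓ + V` is symmetric under Dirichlet conditions;
this is conservation of mass, which also gives `‖u(t)‖ ≤ A`. In the pairing of `ψ` with `∂ₜu` the
potential drops out since `V ψ = 0`, and two integrations by parts move `∂²ₓₓ` onto `ψ`. So
Cauchy–Schwarz bounds the derivative by `2 (A K₁ + (K₃ + A) K₂)`, whatever the size of `V`, and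
the mean value inequality concludes.
-/

open MeasureTheory Set Function ComplexConjugate Complex

variable {a b : ℝ}

theorem intervalIntegral.integral_re {f : ℝ → ℂ} (hf : IntervalIntegrable f volume a b) :
    ∫ x in a..b, (f x).re = (∫ x in a..b, f x).re :=
  reCLM.intervalIntegral_comp_comm hf

theorem ContinuousOn.intervalIntegrable_conj_mul {f g : ℝ → ℂ} (hab : a ≤ b)
    (hf : ContinuousOn f (Icc a b)) (hg : ContinuousOn g (Icc a b)) :
    IntervalIntegrable (fun x => conj (f x) * g x) volume a b :=
  ((continuous_conj.comp_continuousOn hf).mul hg).intervalIntegrable_of_Icc hab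

theorem norm_intervalIntegral_conj_mul_le {f g : ℝ → ℂ} (hab : a ≤ b)
    (hf : ContinuousOn f (Icc a b)) (hg : ContinuousOn g (Icc a b)) :
    ‖∫ x in a..b, conj (f x) * g x‖ ≤
      √(∫ x in a..b, ‖f x‖ ^ 2) * √(∫ x in a..b, ‖g x‖ ^ 2) := by
  have memLp_two {h : ℝ → ℂ} (hh : ContinuousOn h (Icc a b)) :
      MemLp h (ENNReal.ofReal 2) (volume.restrict (Ioc a b)) := by
    obtain ⟨C, hC⟩ := isCompact_Icc.exists_bound_of_continuousOn hh
    refine MemLp.of_bound (hh.intervalIntegrable_of_Icc hab).aestronglyMeasurable C ?_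
    filter_upwards [ae_restrict_mem measurableSet_Ioc] with x hx
    exact hC x (Ioc_subset_Icc_self hx)
  have integral_rpow_two (h : ℝ → ℂ) :
      ∫ x in Ioc a b, ‖h x‖ ^ (2 : ℝ) = ∫ x in a..b, ‖h x‖ ^ 2 := by
    simp [intervalIntegral.integral_of_le hab]
  calc ‖∫ x in a..b, conj (f x) * g x‖ ≤ ∫ x in a..b, ‖f x‖ * ‖g x‖ := by
        simpa using intervalIntegral.norm_integral_le_integral_norm (μ := volume)
          (f := fun x => conj (f x) * g x) hab
    _ = ∫ x in Ioc a b, ‖f x‖ * ‖g x‖ := intervalIntegral.integral_of_le hab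
    _ ≤ (∫ x in Ioc a b, ‖f x‖ ^ (2 : ℝ)) ^ (1 / 2 : ℝ) *
          (∫ x in Ioc a b, ‖g x‖ ^ (2 : ℝ)) ^ (1 / 2 : ℝ) :=
        integral_mul_norm_le_Lp_mul_Lq Real.HolderConjugate.two_two (memLp_two hf) (memLp_two hg)
    _ = _ := by rw [integral_rpow_two, integral_rpow_two, Real.sqrt_eq_rpow, Real.sqrt_eq_rpow]

theorem intervalIntegral_conj_sub_mul_sub {f g f' g' : ℝ → ℂ} (hab : a ≤ b)
    (hf : ContinuousOn f (Icc a b)) (hg : ContinuousOn g (Icc a b))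
    (hf' : ContinuousOn f' (Icc a b)) (hg' : ContinuousOn g' (Icc a b)) :
    ∫ x in a..b, conj (f x - g x) * (f' x - g' x) =
      (∫ x in a..b, conj (f x) * f' x) - (∫ x in a..b, conj (g x) * f' x) -
        (∫ x in a..b, conj (f x) * g' x) + ∫ x in a..b, conj (g x) * g' x := by
  have hff' := hf.intervalIntegrable_conj_mul hab hf'
  have hgf' := hg.intervalIntegrable_conj_mul hab hf'
  have hfg' := hf.intervalIntegrable_conj_mul hab hg'
  have hgg' := hg.intervalIntegrable_conj_mul hab hg'
  simp only [map_sub, sub_mul, mul_sub]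
  rw [intervalIntegral.integral_sub (hff'.sub hgf') (hfg'.sub hgg'),
    intervalIntegral.integral_sub hff' hgf', intervalIntegral.integral_sub hfg' hgg']
  ring

theorem intervalIntegral.integral_conj_mul_deriv_eq_neg {f f' g g' : ℝ → ℂ} (hab : a ≤ b)
    (hf : ∀ x ∈ Icc a b, HasDerivAt f (f' x) x) (hg : ∀ x ∈ Icc a b, HasDerivAt g (g' x) x)
    (hf' : ContinuousOn f' (Icc a b)) (hg' : ContinuousOn g' (Icc a b))
    (ha : f a = 0 ∨ g a = 0) (hb : f b = 0 ∨ g b = 0) :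
    ∫ x in a..b, conj (f x) * g' x = -∫ x in a..b, conj (f' x) * g x := by
  rw [← uIcc_of_le hab] at hf hg hf' hg'
  rw [integral_mul_deriv_eq_deriv_mul (fun x hx => by simpa using (hf x hx).star) hg
    (by simpa using hf'.star.intervalIntegrable) hg'.intervalIntegrable]
  rcases ha with ha | ha <;> rcases hb with hb | hb <;> simp [ha, hb]

structure IsDirichletC2On (a b : ℝ) (f f' f'' : ℝ → ℂ) : Prop where
  hasDerivAt : ∀ x ∈ Icc a b, HasDerivAt f (f' x) x
  hasDerivAt_deriv : ∀ x ∈ Icc a b, HasDerivAt f' (f'' x) x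
  continuousOn_deriv2 : ContinuousOn f'' (Icc a b)
  left : f a = 0
  right : f b = 0

namespace IsDirichletC2On

variable {f f' f'' g g' g'' : ℝ → ℂ}

theorem continuousOn (h : IsDirichletC2On a b f f' f'') : ContinuousOn f (Icc a b) :=
  fun x hx => (h.hasDerivAt x hx).continuousAt.continuousWithinAt

theorem continuousOn_deriv (h : IsDirichletC2On a b f f' f'') : ContinuousOn f' (Icc a b) :=
  fun x hx => (h.hasDerivAt_deriv x hx).continuousAt.continuousWithinAt

theorem integral_conj_mul_deriv2_self (h : IsDirichletC2On a b f f' f'') (hab : a ≤ b) :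
    ∫ x in a..b, conj (f x) * f'' x = -((∫ x in a..b, ‖f' x‖ ^ 2 : ℝ) : ℂ) := by
  rw [intervalIntegral.integral_conj_mul_deriv_eq_neg hab h.hasDerivAt h.hasDerivAt_deriv
    h.continuousOn_deriv h.continuousOn_deriv2 (.inl h.left) (.inl h.right)]
  simp only [conj_mul', neg_inj]
  exact_mod_cast intervalIntegral.integral_ofReal

theorem integral_conj_mul_deriv2_comm (hf : IsDirichletC2On a b f f' f'')
    (hg : IsDirichletC2On a b g g' g'') (hab : a ≤ b) :
    ∫ x in a..b, conj (f x) * g'' x = ∫ x in a..b, conj (f'' x) * g x := by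
  rw [intervalIntegral.integral_conj_mul_deriv_eq_neg hab hf.hasDerivAt hg.hasDerivAt_deriv
      hf.continuousOn_deriv hg.continuousOn_deriv2 (.inl hf.left) (.inl hf.right),
    intervalIntegral.integral_conj_mul_deriv_eq_neg hab hf.hasDerivAt_deriv hg.hasDerivAt
      hf.continuousOn_deriv2 hg.continuousOn_deriv (.inr hg.left) (.inr hg.right), neg_neg]

end IsDirichletC2On

section Schrodinger

variable {u u' u'' ut ψ ψ' ψ'' ψt : ℝ → ℂ} {V : ℝ → ℝ}

theorem eq_sub_of_I_mul_eq {w d z : ℂ} {v : ℝ} (h : I * w = -d + v * z) :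
    w = I * d - I * v * z := by
  linear_combination (-I) * h + w * I_sq

theorem re_intervalIntegral_conj_mul_eq_zero_of_schrodinger (hab : a ≤ b)
    (hu : IsDirichletC2On a b u u' u'') (hut : ContinuousOn ut (Icc a b))
    (hpde : ∀ x ∈ Icc a b, I * ut x = -u'' x + V x * u x) :
    (∫ x in a..b, conj (u x) * ut x).re = 0 := by
  have hre : ∀ x ∈ uIcc a b, (conj (u x) * ut x).re = (I * (conj (u x) * u'' x)).re := by
    intro x hx
    rw [uIcc_of_le hab] at hx
    rw [eq_sub_of_I_mul_eq (hpde x hx)]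
    simp only [mul_re, mul_im, sub_re, sub_im, conj_re, conj_im, I_re, I_im, ofReal_re, ofReal_im]
    ring
  rw [← intervalIntegral.integral_re (hu.continuousOn.intervalIntegrable_conj_mul hab hut),
    intervalIntegral.integral_congr hre, intervalIntegral.integral_re
      ((hu.continuousOn.intervalIntegrable_conj_mul hab hu.continuousOn_deriv2).const_mul I),
    intervalIntegral.integral_const_mul, hu.integral_conj_mul_deriv2_self hab]
  simp

theorem intervalIntegral_conj_mul_eq_of_schrodinger (hab : a ≤ b)
    (hψ : IsDirichletC2On a b ψ ψ' ψ'') (hu : IsDirichletC2On a b u u' u'')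
    (hVψ : ∀ x ∈ Icc a b, (V x : ℂ) * ψ x = 0)
    (hpde : ∀ x ∈ Icc a b, I * ut x = -u'' x + V x * u x) :
    ∫ x in a..b, conj (ψ x) * ut x = I * ∫ x in a..b, conj (ψ'' x) * u x := by
  have hpointwise : ∀ x ∈ uIcc a b, conj (ψ x) * ut x = I * (conj (ψ x) * u'' x) := by
    intro x hx
    rw [uIcc_of_le hab] at hx
    have hconj : (V x : ℂ) * conj (ψ x) = 0 := by simpa using congrArg conj (hVψ x hx)
    rw [eq_sub_of_I_mul_eq (hpde x hx)]
    linear_combination (-I * u x) * hconj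
  rw [intervalIntegral.integral_congr hpointwise, intervalIntegral.integral_const_mul,
    hψ.integral_conj_mul_deriv2_comm hu hab]

theorem re_intervalIntegral_conj_sub_mul_sub_le_of_schrodinger (hab : a ≤ b)
    (hu : IsDirichletC2On a b u u' u'') (hut : ContinuousOn ut (Icc a b))
    (hpde : ∀ x ∈ Icc a b, I * ut x = -u'' x + V x * u x)
    (hψ : IsDirichletC2On a b ψ ψ' ψ'') (hψt : ContinuousOn ψt (Icc a b))
    (hVψ : ∀ x ∈ Icc a b, (V x : ℂ) * ψ x = 0) {A K₁ K₂ K₃ : ℝ}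
    (hA : √(∫ x in a..b, ‖u x‖ ^ 2) ≤ A) (hK₁ : √(∫ x in a..b, ‖ψ'' x‖ ^ 2) ≤ K₁)
    (hK₂ : √(∫ x in a..b, ‖ψt x‖ ^ 2) ≤ K₂) (hK₃ : √(∫ x in a..b, ‖ψ x‖ ^ 2) ≤ K₃) :
    2 * (∫ x in a..b, conj (u x - ψ x) * (ut x - ψt x)).re ≤
      2 * (A * K₁ + (K₃ + A) * K₂) := by
  have cauchySchwarz {f g : ℝ → ℂ} {F G : ℝ} (hf : ContinuousOn f (Icc a b))
      (hg : ContinuousOn g (Icc a b)) (hF : √(∫ x in a..b, ‖f x‖ ^ 2) ≤ F)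
      (hG : √(∫ x in a..b, ‖g x‖ ^ 2) ≤ G) :
      ‖∫ x in a..b, conj (f x) * g x‖ ≤ F * G :=
    (norm_intervalIntegral_conj_mul_le hab hf hg).trans
      (mul_le_mul hF hG (Real.sqrt_nonneg _) ((Real.sqrt_nonneg _).trans hF))
  have hψut : |(∫ x in a..b, conj (ψ x) * ut x).re| ≤ K₁ * A := by
    rw [intervalIntegral_conj_mul_eq_of_schrodinger hab hψ hu hVψ hpde]
    refine (abs_re_le_norm _).trans ?_
    rw [norm_mul, norm_I, one_mul]
    exact cauchySchwarz hψ.continuousOn_deriv2 hu.continuousOn hK₁ hA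
  have huψt := (abs_re_le_norm _).trans (cauchySchwarz hu.continuousOn hψt hA hK₂)
  have hψψt := (abs_re_le_norm _).trans (cauchySchwarz hψ.continuousOn hψt hK₃ hK₂)
  rw [intervalIntegral_conj_sub_mul_sub hab hu.continuousOn hψ.continuousOn hut hψt,
    add_re, sub_re, sub_re, re_intervalIntegral_conj_mul_eq_zero_of_schrodinger hab hu hut hpde]
  linarith [abs_le.mp hψut, abs_le.mp huψt, abs_le.mp hψψt]

end Schrodinger

section Parametric

variable {E : Type*} [NormedAddCommGroup E] [NormedSpace ℝ E] {t₁ t₂ : ℝ}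

theorem continuousOn_intervalIntegral_of_continuousOn_prod {F : ℝ → ℝ → E} (hab : a ≤ b)
    (hF : ContinuousOn (uncurry F) (Icc t₁ t₂ ×ˢ Icc a b)) :
    ContinuousOn (fun t => ∫ x in a..b, F t x) (Icc t₁ t₂) := by
  rcases lt_or_ge t₂ t₁ with h | ht
  · simp [Icc_eq_empty_of_lt h]
  -- extend `F` continuously to the whole plane by clamping both variables to the rectangle
  have hG : Continuous (uncurry fun t x => F (projIcc t₁ t₂ ht t) (projIcc a b hab x)) :=
    hF.comp_continuous
      (f := fun p : ℝ × ℝ => ((projIcc t₁ t₂ ht p.1 : ℝ), (projIcc a b hab p.2 : ℝ))) (by fun_prop)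
      fun p => ⟨(projIcc t₁ t₂ ht p.1).2, (projIcc a b hab p.2).2⟩
  refine (intervalIntegral.continuous_parametric_intervalIntegral_of_continuous' hG a b)
    |>.continuousOn.congr fun t ht' => intervalIntegral.integral_congr fun x hx => ?_
  rw [uIcc_of_le hab] at hx
  simp [projIcc_of_mem ht ht', projIcc_of_mem hab hx]

theorem hasDerivAt_intervalIntegral_of_continuousOn_prod {F F' : ℝ → ℝ → E} {t₀ : ℝ}
    (hab : a ≤ b) (hF : ContinuousOn (uncurry F) (Icc t₁ t₂ ×ˢ Icc a b))
    (hF' : ContinuousOn (uncurry F') (Icc t₁ t₂ ×ˢ Icc a b))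
    (hderiv : ∀ t ∈ Icc t₁ t₂, ∀ x ∈ Icc a b, HasDerivAt (F · x) (F' t x) t)
    (ht₀ : t₀ ∈ Ioo t₁ t₂) :
    HasDerivAt (fun t => ∫ x in a..b, F t x) (∫ x in a..b, F' t₀ x) t₀ := by
  obtain ⟨M, hM⟩ := (isCompact_Icc.prod isCompact_Icc).exists_bound_of_continuousOn hF'
  have hx : ∀ x ∈ uIoc a b, x ∈ Icc a b := by
    rw [uIoc_of_le hab]
    exact fun x hx => Ioc_subset_Icc_self hx
  have hIcc : Ioo t₁ t₂ ⊆ Icc t₁ t₂ := Ioo_subset_Icc_self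
  refine (intervalIntegral.hasDerivAt_integral_of_dominated_loc_of_deriv_le (bound := fun _ => M)
    (Ioo_mem_nhds ht₀.1 ht₀.2) ?_ ?_ ?_ ?_ intervalIntegrable_const ?_).2
  · filter_upwards [Ioo_mem_nhds ht₀.1 ht₀.2] with t ht
    exact ((hF.uncurry_left t (hIcc ht)).intervalIntegrable_of_Icc hab).def'.aestronglyMeasurable
  · exact (hF.uncurry_left t₀ (hIcc ht₀)).intervalIntegrable_of_Icc hab
  · exact ((hF'.uncurry_left t₀ (hIcc ht₀)).intervalIntegrable_of_Icc hab).def'.aestronglyMeasurable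
  · exact ae_of_all _ fun x hxab t ht => hM (t, x) ⟨hIcc ht, hx x hxab⟩
  · exact ae_of_all _ fun x hxab t ht => hderiv t (hIcc ht) x (hx x hxab)

theorem intervalIntegral_sq_norm_le_of_re_conj_mul_le {w wt : ℝ → ℝ → ℂ} {C : ℝ} (hab : a ≤ b)
    (hw : ContinuousOn (uncurry w) (Icc t₁ t₂ ×ˢ Icc a b))
    (hwt : ContinuousOn (uncurry wt) (Icc t₁ t₂ ×ˢ Icc a b))
    (hderiv : ∀ t ∈ Icc t₁ t₂, ∀ x ∈ Icc a b, HasDerivAt (w · x) (wt t x) t)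
    (hC : ∀ t ∈ Ioo t₁ t₂, 2 * (∫ x in a..b, conj (w t x) * wt t x).re ≤ C) :
    ∀ t ∈ Icc t₁ t₂,
      ∫ x in a..b, ‖w t x‖ ^ 2 ≤ (∫ x in a..b, ‖w t₁ x‖ ^ 2) + C * (t - t₁) := by
  intro t ht
  have hw2 : ContinuousOn (uncurry fun t x => ‖w t x‖ ^ 2) (Icc t₁ t₂ ×ˢ Icc a b) :=
    fun p hp => (hw p hp).norm.pow 2
  have hD : ∀ s ∈ Ioo t₁ t₂, HasDerivAt (fun t => ∫ x in a..b, ‖w t x‖ ^ 2)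
      (2 * (∫ x in a..b, conj (w s x) * wt s x).re) s := by
    intro s hs
    refine (hasDerivAt_intervalIntegral_of_continuousOn_prod
      (F' := fun t x => 2 * inner ℝ (w t x) (wt t x)) hab hw2
      (continuousOn_const.mul (hw.inner hwt)) (fun t ht x hx => (hderiv t ht x hx).norm_sq)
      hs).congr_deriv ?_
    have hint := ((hw.uncurry_left s (Ioo_subset_Icc_self hs)).intervalIntegrable_conj_mul hab
      (hwt.uncurry_left s (Ioo_subset_Icc_self hs)))
    rw [intervalIntegral.integral_const_mul, ← intervalIntegral.integral_re hint]
    simp only [Complex.inner, mul_comm]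
  have hmono := (convex_Icc t₁ t₂).image_sub_le_mul_sub_of_deriv_le
    (continuousOn_intervalIntegral_of_continuousOn_prod hab hw2)
    (fun s hs => by
      rw [interior_Icc] at hs
      exact (hD s hs).differentiableAt.differentiableWithinAt)
    (fun s hs => by
      rw [interior_Icc] at hs
      exact (hD s hs).deriv ▸ hC s hs)
    t₁ ⟨le_rfl, ht.1.trans ht.2⟩ t ht ht.1
  linarith

end Parametric

theorem stmt_13_general
    (t₁ t₂ : ℝ)
    (V : ℝ → ℝ → ℝ)
    -- the solution u and its partial derivatives
    (u ut ux uxx : ℝ → ℝ → ℂ)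
    (huc : ContinuousOn (fun p : ℝ × ℝ => u p.1 p.2) (Set.Icc t₁ t₂ ×ˢ Set.Icc (0 : ℝ) 1))
    (hutc : ContinuousOn (fun p : ℝ × ℝ => ut p.1 p.2) (Set.Icc t₁ t₂ ×ˢ Set.Icc (0 : ℝ) 1))
    (huxxc : ContinuousOn (fun p : ℝ × ℝ => uxx p.1 p.2) (Set.Icc t₁ t₂ ×ˢ Set.Icc (0 : ℝ) 1))
    (hut : ∀ t ∈ Set.Icc t₁ t₂, ∀ x ∈ Set.Icc (0 : ℝ) 1,
      HasDerivAt (fun s => u s x) (ut t x) t)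
    (hux : ∀ t ∈ Set.Icc t₁ t₂, ∀ x ∈ Set.Icc (0 : ℝ) 1,
      HasDerivAt (fun y => u t y) (ux t x) x)
    (huxx : ∀ t ∈ Set.Icc t₁ t₂, ∀ x ∈ Set.Icc (0 : ℝ) 1,
      HasDerivAt (fun y => ux t y) (uxx t x) x)
    (hubc : ∀ t ∈ Set.Icc t₁ t₂, u t 0 = 0 ∧ u t 1 = 0)
    (hupde : ∀ t ∈ Set.Icc t₁ t₂, ∀ x ∈ Set.Icc (0 : ℝ) 1,
      Complex.I * ut t x = -uxx t x + (V t x : ℂ) * u t x)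
    -- the comparison function ψ and its partial derivatives
    (ψ ψt ψx ψxx : ℝ → ℝ → ℂ)
    (hψc : ContinuousOn (fun p : ℝ × ℝ => ψ p.1 p.2) (Set.Icc t₁ t₂ ×ˢ Set.Icc (0 : ℝ) 1))
    (hψtc : ContinuousOn (fun p : ℝ × ℝ => ψt p.1 p.2) (Set.Icc t₁ t₂ ×ˢ Set.Icc (0 : ℝ) 1))
    (hψxxc : ContinuousOn (fun p : ℝ × ℝ => ψxx p.1 p.2) (Set.Icc t₁ t₂ ×ˢ Set.Icc (0 : ℝ) 1))
    (hψt : ∀ t ∈ Set.Icc t₁ t₂, ∀ x ∈ Set.Icc (0 : ℝ) 1,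
      HasDerivAt (fun s => ψ s x) (ψt t x) t)
    (hψx : ∀ t ∈ Set.Icc t₁ t₂, ∀ x ∈ Set.Icc (0 : ℝ) 1,
      HasDerivAt (fun y => ψ t y) (ψx t x) x)
    (hψxx : ∀ t ∈ Set.Icc t₁ t₂, ∀ x ∈ Set.Icc (0 : ℝ) 1,
      HasDerivAt (fun y => ψx t y) (ψxx t x) x)
    (hψbc : ∀ t ∈ Set.Icc t₁ t₂, ψ t 0 = 0 ∧ ψ t 1 = 0)
    (hψV : ∀ t ∈ Set.Icc t₁ t₂, ∀ x ∈ Set.Icc (0 : ℝ) 1, (V t x : ℂ) * ψ t x = 0)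
    -- the bounds
    (K₁ K₂ K₃ : ℝ)
    (hK₁ : ∀ t ∈ Set.Icc t₁ t₂,
      Real.sqrt (∫ x in (0 : ℝ)..1, ‖ψxx t x‖ ^ 2) ≤ K₁)
    (hK₂ : ∀ t ∈ Set.Icc t₁ t₂,
      Real.sqrt (∫ x in (0 : ℝ)..1, ‖ψt t x‖ ^ 2) ≤ K₂)
    (hK₃ : ∀ t ∈ Set.Icc t₁ t₂,
      Real.sqrt (∫ x in (0 : ℝ)..1, ‖ψ t x‖ ^ 2) ≤ K₃)
    (A : ℝ) (hA : A = Real.sqrt (∫ x in (0 : ℝ)..1, ‖u t₁ x‖ ^ 2)) :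
    ∀ t ∈ Set.Icc t₁ t₂,
      (∫ x in (0 : ℝ)..1, ‖u t x - ψ t x‖ ^ 2) ≤
        (∫ x in (0 : ℝ)..1, ‖u t₁ x - ψ t₁ x‖ ^ 2) +
          2 * (A * K₁ + (K₃ + A) * K₂) * (t - t₁) := by
  have hu (t) (ht : t ∈ Icc t₁ t₂) : IsDirichletC2On 0 1 (u t) (ux t) (uxx t) :=
    ⟨hux t ht, huxx t ht, huxxc.uncurry_left t ht, (hubc t ht).1, (hubc t ht).2⟩
  have hψ (t) (ht : t ∈ Icc t₁ t₂) : IsDirichletC2On 0 1 (ψ t) (ψx t) (ψxx t) :=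
    ⟨hψx t ht, hψxx t ht, hψxxc.uncurry_left t ht, (hψbc t ht).1, (hψbc t ht).2⟩
  have hmass (t) (ht : t ∈ Icc t₁ t₂) : √(∫ x in (0 : ℝ)..1, ‖u t x‖ ^ 2) ≤ A := by
    have hle := intervalIntegral_sq_norm_le_of_re_conj_mul_le (C := 0) zero_le_one huc hutc hut
      (fun s hs => by
        have hs := Ioo_subset_Icc_self hs
        rw [re_intervalIntegral_conj_mul_eq_zero_of_schrodinger zero_le_one (hu s hs)
          (hutc.uncurry_left s hs) (hupde s hs), mul_zero]) t ht
    rw [hA]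
    exact Real.sqrt_le_sqrt (by simpa using hle)
  refine intervalIntegral_sq_norm_le_of_re_conj_mul_le (w := fun t x => u t x - ψ t x)
    (wt := fun t x => ut t x - ψt t x) zero_le_one (huc.sub hψc) (hutc.sub hψtc)
    (fun t ht x hx => (hut t ht x hx).sub (hψt t ht x hx)) fun s hs => ?_
  have hs := Ioo_subset_Icc_self hs
  exact re_intervalIntegral_conj_sub_mul_sub_le_of_schrodinger zero_le_one (hu s hs)
    (hutc.uncurry_left s hs) (hupde s hs) (hψ s hs) (hψtc.uncurry_left s hs) (hψV s hs)
    (hmass s hs) (hK₁ s hs) (hK₂ s hs) (hK₃ s hs)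

/-- Comparison lemma for the quasi-adiabatic wall motion: a solution `u` of the
Schrödinger equation `i∂_t u = -∂²ₓₓ u + V u` on `[t₁,t₂] × [0,1]` with Dirichlet
boundary conditions stays close to any comparison function `ψ` that vanishes on the
support of the potential:
`‖u(t)-ψ(t)‖² ≤ ‖u(t₁)-ψ(t₁)‖² + 2(A K₁ + (K₃+A) K₂)(t-t₁)`. -/
theorem stmt_13
    (t₁ t₂ : ℝ) (ht : t₁ < t₂)
    (V : ℝ → ℝ → ℝ)
    (hVc : ContinuousOn (fun p : ℝ × ℝ => V p.1 p.2) (Set.Icc t₁ t₂ ×ˢ Set.Icc (0 : ℝ) 1))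
    -- the solution u and its partial derivatives
    (u ut ux uxx : ℝ → ℝ → ℂ)
    (huc : ContinuousOn (fun p : ℝ × ℝ => u p.1 p.2) (Set.Icc t₁ t₂ ×ˢ Set.Icc (0 : ℝ) 1))
    (hutc : ContinuousOn (fun p : ℝ × ℝ => ut p.1 p.2) (Set.Icc t₁ t₂ ×ˢ Set.Icc (0 : ℝ) 1))
    (huxxc : ContinuousOn (fun p : ℝ × ℝ => uxx p.1 p.2) (Set.Icc t₁ t₂ ×ˢ Set.Icc (0 : ℝ) 1))
    (hut : ∀ t ∈ Set.Icc t₁ t₂, ∀ x ∈ Set.Icc (0 : ℝ) 1,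
      HasDerivAt (fun s => u s x) (ut t x) t)
    (hux : ∀ t ∈ Set.Icc t₁ t₂, ∀ x ∈ Set.Icc (0 : ℝ) 1,
      HasDerivAt (fun y => u t y) (ux t x) x)
    (huxx : ∀ t ∈ Set.Icc t₁ t₂, ∀ x ∈ Set.Icc (0 : ℝ) 1,
      HasDerivAt (fun y => ux t y) (uxx t x) x)
    (hubc : ∀ t ∈ Set.Icc t₁ t₂, u t 0 = 0 ∧ u t 1 = 0)
    (hupde : ∀ t ∈ Set.Icc t₁ t₂, ∀ x ∈ Set.Icc (0 : ℝ) 1,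
      Complex.I * ut t x = -uxx t x + (V t x : ℂ) * u t x)
    -- the comparison function ψ and its partial derivatives
    (ψ ψt ψx ψxx : ℝ → ℝ → ℂ)
    (hψc : ContinuousOn (fun p : ℝ × ℝ => ψ p.1 p.2) (Set.Icc t₁ t₂ ×ˢ Set.Icc (0 : ℝ) 1))
    (hψtc : ContinuousOn (fun p : ℝ × ℝ => ψt p.1 p.2) (Set.Icc t₁ t₂ ×ˢ Set.Icc (0 : ℝ) 1))
    (hψxxc : ContinuousOn (fun p : ℝ × ℝ => ψxx p.1 p.2) (Set.Icc t₁ t₂ ×ˢ Set.Icc (0 : ℝ) 1))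
    (hψt : ∀ t ∈ Set.Icc t₁ t₂, ∀ x ∈ Set.Icc (0 : ℝ) 1,
      HasDerivAt (fun s => ψ s x) (ψt t x) t)
    (hψx : ∀ t ∈ Set.Icc t₁ t₂, ∀ x ∈ Set.Icc (0 : ℝ) 1,
      HasDerivAt (fun y => ψ t y) (ψx t x) x)
    (hψxx : ∀ t ∈ Set.Icc t₁ t₂, ∀ x ∈ Set.Icc (0 : ℝ) 1,
      HasDerivAt (fun y => ψx t y) (ψxx t x) x)
    (hψbc : ∀ t ∈ Set.Icc t₁ t₂, ψ t 0 = 0 ∧ ψ t 1 = 0)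
    (hψV : ∀ t ∈ Set.Icc t₁ t₂, ∀ x ∈ Set.Icc (0 : ℝ) 1, (V t x : ℂ) * ψ t x = 0)
    -- the bounds
    (K₁ K₂ K₃ : ℝ) (hK₁0 : 0 ≤ K₁) (hK₂0 : 0 ≤ K₂) (hK₃0 : 0 ≤ K₃)
    (hK₁ : ∀ t ∈ Set.Icc t₁ t₂,
      Real.sqrt (∫ x in (0 : ℝ)..1, ‖ψxx t x‖ ^ 2) ≤ K₁)
    (hK₂ : ∀ t ∈ Set.Icc t₁ t₂,
      Real.sqrt (∫ x in (0 : ℝ)..1, ‖ψt t x‖ ^ 2) ≤ K₂)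
    (hK₃ : ∀ t ∈ Set.Icc t₁ t₂,
      Real.sqrt (∫ x in (0 : ℝ)..1, ‖ψ t x‖ ^ 2) ≤ K₃)
    (A : ℝ) (hA : A = Real.sqrt (∫ x in (0 : ℝ)..1, ‖u t₁ x‖ ^ 2)) :
    ∀ t ∈ Set.Icc t₁ t₂,
      (∫ x in (0 : ℝ)..1, ‖u t x - ψ t x‖ ^ 2) ≤
        (∫ x in (0 : ℝ)..1, ‖u t₁ x - ψ t₁ x‖ ^ 2) +
          2 * (A * K₁ + (K₃ + A) * K₂) * (t - t₁) :=
  stmt_13_general t₁ t₂ V u ut ux uxx huc hutc huxxc hut hux huxx hubc hupde ψ ψt ψx ψxx hψc hψtc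
    hψxxc hψt hψx hψxx hψbc hψV K₁ K₂ K₃ hK₁ hK₂ hK₃ A hA
end
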